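/- arXiv:1811.10290 — 7 statements merged into one kernel-verified Lean document; each statement's English description precedes it below -/
import Mathlib

section
/- Let λ be a self-conjugate partition with main diagonal hook lengths D(λ) = {δ_1 > δ_2 > ... > δ_d}. Then the hook lengths of the first-column boxes in rows 1 through d are exactly {(δ_1+δ_i)/2 : 1 ≤ i ≤ d}. -/
/-- A partition, encoded as an antitone, eventually-zero function (0-indexed parts). -/
def IsPartition (l : ℕ → ℕ) : Prop := Antitone l ∧ ∃ N, l N = 0

/-- The conjugate partition: `conj l j` is the number of rows whose length exceeds `j`. -/
noncomputable def conj (l : ℕ → ℕ) (j : ℕ) : ℕ := Set.ncard {i | j < l i}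

/-- Hook length of the box in row `i`, column `j` (0-indexed): arm + leg + 1. -/
noncomputable def hookLen (l : ℕ → ℕ) (i j : ℕ) : ℕ :=
  (l i - (j + 1)) + (conj l j - (i + 1)) + 1

/-- A self-conjugate partition equals its conjugate. -/
def SelfConj (l : ℕ → ℕ) : Prop := conj l = l

/-- Side length of the Durfee square: the number of boxes on the main diagonal. -/
noncomputable def durfee (l : ℕ → ℕ) : ℕ := Set.ncard {i | i < l i}

/-- The number of boxes of the Young diagram. -/
noncomputable def psize (l : ℕ → ℕ) : ℕ := Set.ncard {p : ℕ × ℕ | p.2 < l p.1}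

/-- The disparity: (#boxes with odd hook length) - (#boxes with even hook length). -/
noncomputable def dp (l : ℕ → ℕ) : ℤ :=
  (Set.ncard {p : ℕ × ℕ | p.2 < l p.1 ∧ Odd (hookLen l p.1 p.2)} : ℤ) -
  (Set.ncard {p : ℕ × ℕ | p.2 < l p.1 ∧ Even (hookLen l p.1 p.2)} : ℤ)

/-- The set of main diagonal hook lengths. -/
def Dset (l : ℕ → ℕ) : Set ℕ := {x | ∃ i, i < l i ∧ x = hookLen l i i}

/-- Main diagonal hook lengths congruent to 1 mod 4. -/
def D1 (l : ℕ → ℕ) : Set ℕ := {x ∈ Dset l | x % 4 = 1}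

/-- Main diagonal hook lengths congruent to 3 mod 4. -/
def D3 (l : ℕ → ℕ) : Set ℕ := {x ∈ Dset l | x % 4 = 3}

/-- A `t`-core partition: no hook length is divisible by `t`. -/
def IsCore (l : ℕ → ℕ) (t : ℕ) : Prop := ∀ i j, j < l i → ¬ (t ∣ hookLen l i j)

theorem first_column_hooks_in_durfee (l : ℕ → ℕ) (hl : IsPartition l) (hsc : SelfConj l) :
    {x | ∃ i, i < durfee l ∧ x = hookLen l i 0} =
      {x | ∃ i, i < durfee l ∧ x = (hookLen l 0 0 + hookLen l i i) / 2} := by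
  have hd : ∀ i, i < durfee l → i < l i := by
    intro i hid
    by_contra h
    push_neg at h
    have hsub : {j | j < l j} ⊆ Set.Iio i := by
      intro j hj
      simp only [Set.mem_setOf_eq] at hj
      by_contra hji
      simp only [Set.mem_Iio, not_lt] at hji
      have := hl.1 hji
      omega
    have hle := Set.ncard_le_ncard hsub (Set.finite_Iio i)
    have hIio : (Set.Iio i).ncard = i := by
      rw [Set.ncard_eq_toFinset_card']; simp
    rw [hIio] at hle
    unfold durfee at hid
    omega
  ext x
  simp only [Set.mem_setOf_eq]
  constructor <;> rintro ⟨i, hi, rfl⟩ <;> refine ⟨i, hi, ?_⟩ <;>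
  · have h1 := hd i hi
    have h2 : l i ≤ l 0 := hl.1 (Nat.zero_le i)
    simp only [hookLen, hsc, SelfConj] at *
    rw [hsc]
    omega
end

section
/- Let λ be a self-conjugate partition with main diagonal hook lengths D(λ) = {δ_1 > δ_2 > ... > δ_d}. Then the set of hook lengths {h_λ(i,1) : d+1 ≤ i ≤ λ_1} equals the set difference {(δ_1-1)/2, (δ_1-3)/2, ..., 1} \ {(δ_1-δ_j)/2 : 2 ≤ j ≤ d}. -/
lemma ncard_Iio_nat (n : ℕ) : (Set.Iio n).ncard = n := by
  rw [← Finset.coe_range, Set.ncard_coe_finset, Finset.card_range]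

lemma ncard_Iic_nat (n : ℕ) : (Set.Iic n).ncard = n + 1 := by
  rw [← Finset.coe_Iic, Set.ncard_coe_finset, Nat.card_Iic]

lemma lower_eq_Iio (S : Set ℕ) (hfin : S.Finite) (hlow : ∀ a b : ℕ, a ≤ b → b ∈ S → a ∈ S) :
    S = Set.Iio S.ncard := by
  ext i
  simp only [Set.mem_Iio]
  constructor
  · intro hi
    have hsub : Set.Iic i ⊆ S := fun a ha => hlow a i ha hi
    have := Set.ncard_le_ncard hsub hfin
    rw [ncard_Iic_nat] at this; omega
  · intro hi
    by_contra hns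
    have hsub : S ⊆ Set.Iio i := by
      intro b hb
      rw [Set.mem_Iio]
      by_contra hbi
      exact hns (hlow i b (by omega) hb)
    have := Set.ncard_le_ncard hsub (Set.finite_Iio i)
    rw [ncard_Iio_nat] at this; omega

theorem first_column_hooks_below_durfee (l : ℕ → ℕ) (hl : IsPartition l) (hsc : SelfConj l)
    (h0 : 0 < l 0) :
    {x | ∃ i, durfee l ≤ i ∧ i < conj l 0 ∧ x = hookLen l i 0} =
      {x | 1 ≤ x ∧ x ≤ (hookLen l 0 0 - 1) / 2} \
        {x | ∃ j, 1 ≤ j ∧ j < durfee l ∧ x = (hookLen l 0 0 - hookLen l j j) / 2} := by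
  obtain ⟨hmono, N, hN⟩ := hl
  have hsc' : conj l = l := hsc
  -- symmetry of the diagram
  have hsym : ∀ i j : ℕ, j < l i ↔ i < l j := by
    intro i j
    have hfin : ({k | j < l k} : Set ℕ).Finite := by
      apply Set.Finite.subset (Set.finite_Iio N)
      intro k hk
      simp only [Set.mem_setOf_eq] at hk
      simp only [Set.mem_Iio]
      by_contra h
      have := hmono (not_lt.mp h : N ≤ k)
      omega
    have hlow : ∀ a b : ℕ, a ≤ b → b ∈ {k | j < l k} → a ∈ {k | j < l k} := by
      intro a b hab hb; exact lt_of_lt_of_le hb (hmono hab)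
    have heq := lower_eq_Iio _ hfin hlow
    have hc : ({k | j < l k} : Set ℕ).ncard = l j := congrFun hsc j
    rw [hc] at heq
    have := Set.ext_iff.mp heq i
    simpa using this
  -- the diagonal set
  have hdiag : ∀ i, i < l i ↔ i < durfee l := by
    intro i
    have hfin : ({k | k < l k} : Set ℕ).Finite := by
      apply Set.Finite.subset (Set.finite_Iio (l 0))
      intro k hk
      simp only [Set.mem_setOf_eq] at hk
      have := hmono (Nat.zero_le k)
      simp only [Set.mem_Iio]; omega
    have hlow : ∀ a b : ℕ, a ≤ b → b ∈ {k | k < l k} → a ∈ {k | k < l k} := by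
      intro a b hab hb
      simp only [Set.mem_setOf_eq] at hb ⊢
      have := hmono hab
      omega
    have heq := lower_eq_Iio _ hfin hlow
    have : durfee l = ({k | k < l k} : Set ℕ).ncard := rfl
    rw [← this] at heq
    have := Set.ext_iff.mp heq i
    simpa using this
  have hpos : ∀ i, i < l 0 → 0 < l i := fun i hi => (hsym i 0).mpr hi
  have hd1 : 1 ≤ durfee l := (hdiag 0).mp h0
  have hdn : durfee l ≤ l 0 := by
    have h1 := (hdiag (durfee l - 1)).mpr (by omega)
    have h2 := hmono (Nat.zero_le (durfee l - 1))
    omega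
  -- key disjointness fact
  have hne : ∀ j i, j < durfee l → durfee l ≤ i → i < l 0 → l j - j ≠ i + 1 - l i := by
    intro j i hj hdi hin heq
    have hjlj : j < l j := (hdiag j).mpr hj
    have hili : l i ≤ i := by
      by_contra h
      have := (hdiag i).mp (by omega)
      omega
    have hl1 : 0 < l i := hpos i hin
    by_cases h : j < l i
    · have := (hsym i j).mp h
      omega
    · have h2 : ¬ i < l j := fun hh => h ((hsym i j).mpr hh)
      omega
  -- finite set counting
  have hAcard : ((Finset.range (durfee l)).image (fun j => l j - j)).card = durfee l := by
    rw [Finset.card_image_of_injOn, Finset.card_range]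
    intro j hj j' hj' hgg
    simp only [Finset.coe_range, Set.mem_Iio] at hj hj'
    have h1 : j < l j := (hdiag j).mpr hj
    have h2 : j' < l j' := (hdiag j').mpr hj'
    have hgg' : l j - j = l j' - j' := hgg
    rcases lt_trichotomy j j' with h | h | h
    · have := hmono h.le; omega
    · exact h
    · have := hmono h.le; omega
  have hBcard : ((Finset.Ico (durfee l) (l 0)).image (fun i => i + 1 - l i)).card
      = l 0 - durfee l := by
    rw [Finset.card_image_of_injOn, Nat.card_Ico]
    intro i hi i' hi' hgg
    simp only [Finset.coe_Ico, Set.mem_Ico] at hi hi'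
    have h1 : l i ≤ i := by
      by_contra h; have := (hdiag i).mp (by omega); omega
    have h2 : l i' ≤ i' := by
      by_contra h; have := (hdiag i').mp (by omega); omega
    have h3 : 0 < l i := hpos i hi.2
    have h4 : 0 < l i' := hpos i' hi'.2
    have hgg' : i + 1 - l i = i' + 1 - l i' := hgg
    rcases lt_trichotomy i i' with h | h | h
    · have := hmono h.le; omega
    · exact h
    · have := hmono h.le; omega
  have hdisj : Disjoint ((Finset.range (durfee l)).image (fun j => l j - j))
      ((Finset.Ico (durfee l) (l 0)).image (fun i => i + 1 - l i)) := by
    rw [Finset.disjoint_left]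
    intro m hmA hmB
    obtain ⟨j, hj, hgj⟩ := Finset.mem_image.mp hmA
    obtain ⟨i, hi, hfi⟩ := Finset.mem_image.mp hmB
    rw [Finset.mem_range] at hj
    rw [Finset.mem_Ico] at hi
    have hgj' : l j - j = m := hgj
    have hfi' : i + 1 - l i = m := hfi
    exact hne j i hj hi.1 hi.2 (by omega)
  have hkey : (Finset.range (durfee l)).image (fun j => l j - j) ∪
      (Finset.Ico (durfee l) (l 0)).image (fun i => i + 1 - l i) = Finset.Icc 1 (l 0) := by
    apply Finset.eq_of_subset_of_card_le
    · intro m hm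
      rw [Finset.mem_Icc]
      rcases Finset.mem_union.mp hm with h | h
      · obtain ⟨j, hj, hgj⟩ := Finset.mem_image.mp h
        rw [Finset.mem_range] at hj
        have hgj' : l j - j = m := hgj
        have h1 : j < l j := (hdiag j).mpr hj
        have h2 := hmono (Nat.zero_le j)
        omega
      · obtain ⟨i, hi, hfi⟩ := Finset.mem_image.mp h
        rw [Finset.mem_Ico] at hi
        have hfi' : i + 1 - l i = m := hfi
        have h1 : l i ≤ i := by
          by_contra h'; have := (hdiag i).mp (by omega); omega
        have h2 : 0 < l i := hpos i hi.2
        omega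
    · rw [Nat.card_Icc, Finset.card_union_of_disjoint hdisj, hAcard, hBcard]
      omega
  -- now the set equality
  ext x
  simp only [Set.mem_setOf_eq, Set.mem_diff, hookLen, hsc']
  constructor
  · rintro ⟨i, hdi, hin, rfl⟩
    have hli : l i ≤ i := by
      by_contra h; have := (hdiag i).mp (by omega); omega
    have hl1 : 0 < l i := hpos i hin
    refine ⟨⟨by omega, by omega⟩, ?_⟩
    rintro ⟨j, hj1, hjd, hxe⟩
    have hjlj : j < l j := (hdiag j).mpr hjd
    have hlj0 : l j ≤ l 0 := hmono (Nat.zero_le j)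
    exact hne j i hjd hdi hin (by omega)
  · rintro ⟨⟨hx1, hx2⟩, hnot⟩
    have hx2' : x ≤ l 0 - 1 := by omega
    have hmem : l 0 - x ∈ (Finset.range (durfee l)).image (fun j => l j - j) ∪
        (Finset.Ico (durfee l) (l 0)).image (fun i => i + 1 - l i) := by
      rw [hkey, Finset.mem_Icc]; omega
    rcases Finset.mem_union.mp hmem with hA | hB
    · obtain ⟨j, hj, hgj⟩ := Finset.mem_image.mp hA
      rw [Finset.mem_range] at hj
      have hgj' : l j - j = l 0 - x := hgj
      have hjlj : j < l j := (hdiag j).mpr hj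
      have hlj0 : l j ≤ l 0 := hmono (Nat.zero_le j)
      have hj1 : 1 ≤ j := by
        rcases Nat.eq_zero_or_pos j with rfl | h
        · omega
        · exact h
      exact absurd ⟨j, hj1, hj, by omega⟩ hnot
    · obtain ⟨i, hi, hfi⟩ := Finset.mem_image.mp hB
      rw [Finset.mem_Ico] at hi
      have hfi' : i + 1 - l i = l 0 - x := hfi
      have hli : l i ≤ i := by
        by_contra h; have := (hdiag i).mp (by omega); omega
      have hl1 : 0 < l i := hpos i hi.2
      exact ⟨i, hi.1, hi.2, by omega⟩
end

section
/- For a self-conjugate partition λ, define dp(λ) = (number of boxes with odd hook length) − (number of boxes with even hook length). If λ has r main diagonal hook lengths congruent to 1 mod 4 and s main diagonal hook lengths congruent to 3 mod 4, then dp(λ) = 2(r+s)² − (r+s) + 2s − 8rs. -/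
open Finset in
lemma aux_sum_neg_one_pow (a : ℕ) : ∀ b, a ≤ b → 2 * ∑ j ∈ Finset.Ico a b, (-1:ℤ)^j = (-1:ℤ)^a - (-1)^b := by
  intro b
  induction b with
  | zero => intro h; interval_cases a; simp
  | succ n ih =>
    intro h
    rcases Nat.lt_or_ge a (n+1) with h1 | h2
    · have ha : a ≤ n := by omega
      rw [Finset.sum_Ico_succ_top ha, mul_add, ih ha, pow_succ]
      ring
    · have : a = n+1 := by omega
      subst this; simp

open Finset in
lemma aux_sq_sum (f : ℕ → ℤ) : ∀ n, (∑ i ∈ range n, f i)^2 = ∑ i ∈ range n, (f i)^2 + 2 * ∑ i ∈ range n, f i * ∑ k ∈ range i, f k := by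
  intro n
  induction n with
  | zero => simp
  | succ n ih =>
    rw [Finset.sum_range_succ, Finset.sum_range_succ, Finset.sum_range_succ (fun i => f i * ∑ k ∈ range i, f k)]
    ring_nf
    ring_nf at ih
    linarith [ih]

open Finset in
lemma aux_sum_ite_range (f : ℕ → ℤ) (m n : ℕ) (h : m ≤ n) :
    ∑ j ∈ range n, (if j < m then f j else 0) = ∑ j ∈ range m, f j := by
  rw [← Finset.sum_filter]
  congr 1
  ext j
  simp only [Finset.mem_filter, Finset.mem_range]
  omega

open Finset in
lemma aux_sum_ite_Ico (f : ℕ → ℤ) (a m n : ℕ) (ham : a ≤ m) (h : m ≤ n) :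
    ∑ j ∈ Finset.Ico a n, (if j < m then f j else 0) = ∑ j ∈ Finset.Ico a m, f j := by
  rw [← Finset.sum_filter]
  congr 1
  ext j
  simp only [Finset.mem_filter, Finset.mem_Ico]
  omega

lemma aux_lower_finset (s : Finset ℕ) (h : ∀ a b, a ≤ b → b ∈ s → a ∈ s) :
    s = Finset.range s.card := by
  apply Finset.eq_of_subset_of_card_le
  · intro b hb
    rw [Finset.mem_range]
    have hsub : Finset.Iic b ⊆ s := fun a ha => h a b (Finset.mem_Iic.mp ha) hb
    have := Finset.card_le_card hsub
    rw [Nat.card_Iic] at this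
    omega
  · simp

lemma aux_lower_ncard (S : Set ℕ) (hfin : S.Finite) (hlow : ∀ a b, a ≤ b → b ∈ S → a ∈ S) :
    ∀ i, i ∈ S ↔ i < S.ncard := by
  intro i
  have h1 : S = ↑hfin.toFinset := by simp
  have h2 : hfin.toFinset = Finset.range hfin.toFinset.card := by
    apply aux_lower_finset
    intro a b hab hb
    rw [Set.Finite.mem_toFinset] at *
    exact hlow a b hab hb
  have h3 : S.ncard = hfin.toFinset.card := Set.ncard_eq_toFinset_card S hfin
  rw [h3, ← Set.Finite.mem_toFinset hfin]
  conv_lhs => rw [h2]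
  exact Finset.mem_range

lemma lt_iff_lt_conj (l : ℕ → ℕ) (hl : IsPartition l) (i j : ℕ) :
    j < l i ↔ i < conj l j := by
  obtain ⟨hmono, N, hN⟩ := hl
  have hfin : {k | j < l k}.Finite := by
    apply Set.Finite.subset (Set.finite_Iio N)
    intro k hk
    simp only [Set.mem_setOf_eq] at hk
    simp only [Set.mem_Iio]
    by_contra h
    push_neg at h
    have := hmono h
    omega
  have hlow : ∀ a b, a ≤ b → b ∈ {k | j < l k} → a ∈ {k | j < l k} := by
    intro a b hab hb
    simp only [Set.mem_setOf_eq] at *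
    exact lt_of_lt_of_le hb (hmono hab)
  exact aux_lower_ncard _ hfin hlow i

lemma durfee_iff (l : ℕ → ℕ) (hl : IsPartition l) (i : ℕ) :
    i < l i ↔ i < durfee l := by
  obtain ⟨hmono, N, hN⟩ := hl
  have hfin : {k | k < l k}.Finite := by
    apply Set.Finite.subset (Set.finite_Iio N)
    intro k hk
    simp only [Set.mem_setOf_eq] at hk
    simp only [Set.mem_Iio]
    by_contra h
    push_neg at h
    have := hmono h
    omega
  have hlow : ∀ a b, a ≤ b → b ∈ {k | k < l k} → a ∈ {k | k < l k} := by
    intro a b hab hb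
    simp only [Set.mem_setOf_eq] at *
    have := hmono hab
    omega
  exact aux_lower_ncard _ hfin hlow i

lemma box_symm (l : ℕ → ℕ) (hl : IsPartition l) (hsc : SelfConj l) (i j : ℕ) :
    j < l i ↔ i < l j := by
  rw [lt_iff_lt_conj l hl, hsc]

lemma durfee_le_row (l : ℕ → ℕ) (hl : IsPartition l) (i : ℕ) (hi : i < durfee l) :
    durfee l ≤ l i := by
  have h1 : durfee l - 1 < l (durfee l - 1) := (durfee_iff l hl _).mpr (by omega)
  have h2 : l (durfee l - 1) ≤ l i := hl.1 (by omega)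
  omega

lemma row_le_durfee (l : ℕ → ℕ) (hl : IsPartition l) (hsc : SelfConj l) (i : ℕ)
    (hi : durfee l ≤ i) : l i ≤ durfee l := by
  by_contra h
  push_neg at h
  have : i < l (durfee l) := (box_symm l hl hsc i (durfee l)).mp h
  have : durfee l < l (durfee l) := by omega
  have := (durfee_iff l hl (durfee l)).mp this
  omega

lemma col_count (l : ℕ → ℕ) (hl : IsPartition l) (hsc : SelfConj l) (i j : ℕ)
    (hi : i < durfee l) (hj1 : l (i+1) ≤ j) (hjd : durfee l ≤ j) (hj2 : j < l i) :
    l j = i + 1 := by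
  have : conj l j = l j := congrFun hsc j
  rw [← this]
  unfold conj
  have hset : {k | j < l k} = Set.Iio (i+1) := by
    ext k
    simp only [Set.mem_setOf_eq, Set.mem_Iio]
    constructor
    · intro hk
      by_contra hc
      push_neg at hc
      have := hl.1 hc
      omega
    · intro hk
      have := hl.1 (show k ≤ i by omega)
      omega
  rw [hset]
  have : (Set.Iio (i+1) : Set ℕ) = ↑(Finset.range (i+1)) := by
    ext k; simp
  rw [this, Set.ncard_coe_finset, Finset.card_range]

lemma neg_one_pow_self_mul (a : ℕ) : (-1:ℤ)^a * (-1:ℤ)^a = 1 := by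
  rw [← pow_add]
  exact Even.neg_one_pow ⟨a, rfl⟩

lemma sum_const_pow (c a b : ℕ) (h : a ≤ b) :
    2 * ∑ j ∈ Finset.Ico a b, (-1:ℤ)^(c + j) = (-1:ℤ)^(c+a) - (-1)^(c+b) := by
  have : ∀ j ∈ Finset.Ico a b, (-1:ℤ)^(c+j) = (-1:ℤ)^c * (-1)^j := by
    intro j _; rw [pow_add]
  rw [Finset.sum_congr rfl this, ← Finset.mul_sum, ← mul_assoc,
    mul_comm (2:ℤ) ((-1:ℤ)^c), mul_assoc, aux_sum_neg_one_pow a b h, pow_add, pow_add]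
  ring

lemma key_T (l : ℕ → ℕ) (hl : IsPartition l) (hsc : SelfConj l) :
    ∀ m i, i + m + 1 = durfee l →
    2 * ∑ j ∈ Finset.Ico (durfee l) (l i), (-1:ℤ)^(l j + j) =
      2 * ∑ k ∈ Finset.Ico (i+1) (durfee l), (-1:ℤ)^(l k + k) + 1 + (-1:ℤ)^(l i + i) := by
  intro m
  induction m with
  | zero =>
    intro i hi
    have hid : i < durfee l := by omega
    have hdl : durfee l ≤ l i := durfee_le_row l hl i hid
    have hcc : ∀ j ∈ Finset.Ico (durfee l) (l i), (-1:ℤ)^(l j + j) = (-1:ℤ)^((i+1) + j) := by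
      intro j hj
      rw [Finset.mem_Ico] at hj
      have : l j = i + 1 := col_count l hl hsc i j hid
        ((row_le_durfee l hl hsc (i+1) (by omega)).trans hj.1) hj.1 hj.2
      rw [this, add_comm]
    rw [Finset.sum_congr rfl hcc, sum_const_pow (i+1) _ _ hdl]
    have h1 : Finset.Ico (i+1) (durfee l) = ∅ := by
      rw [Finset.Ico_eq_empty_iff]; omega
    rw [h1, Finset.sum_empty]
    have h2 : durfee l = i + 1 := by omega
    rw [h2]
    have e1 : (-1:ℤ)^((i+1)+(i+1)) = 1 := Even.neg_one_pow ⟨i+1, rfl⟩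
    have e2 : (-1:ℤ)^((i+1) + l i) = -(-1:ℤ)^(l i + i) := by
      have h3 : (i+1) + l i = (l i + i) + 1 := by omega
      rw [h3, pow_succ]; ring
    rw [e1, e2]; ring
  | succ m ih =>
    intro i hi
    have hid : i < durfee l := by omega
    have hi1d : i + 1 < durfee l := by omega
    have hmono : l (i+1) ≤ l i := hl.1 (by omega)
    have hd1 : durfee l ≤ l (i+1) := durfee_le_row l hl (i+1) hi1d
    have hsplit := Finset.sum_Ico_consecutive (fun j => (-1:ℤ)^(l j + j)) hd1 hmono
    have hcc : ∀ j ∈ Finset.Ico (l (i+1)) (l i), (-1:ℤ)^(l j + j) = (-1:ℤ)^((i+1) + j) := by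
      intro j hj
      rw [Finset.mem_Ico] at hj
      have : l j = i + 1 := col_count l hl hsc i j hid hj.1 (hd1.trans hj.1) hj.2
      rw [this, add_comm]
    have hbot : ∑ k ∈ Finset.Ico (i+1) (durfee l), (-1:ℤ)^(l k + k)
        = (-1:ℤ)^(l (i+1) + (i+1)) + ∑ k ∈ Finset.Ico (i+2) (durfee l), (-1:ℤ)^(l k + k) :=
      Finset.sum_eq_sum_Ico_succ_bot hi1d _
    have ihh := ih (i+1) (by omega)
    have h2 : 2 * ∑ j ∈ Finset.Ico (l (i+1)) (l i), (-1:ℤ)^(l j + j)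
        = (-1:ℤ)^((i+1) + l (i+1)) - (-1:ℤ)^((i+1) + l i) := by
      rw [Finset.sum_congr rfl hcc, sum_const_pow (i+1) _ _ hmono]
    rw [← hsplit]
    rw [hbot]
    have e1 : (-1:ℤ)^((i+1) + l (i+1)) = (-1:ℤ)^(l (i+1) + (i+1)) := by rw [add_comm]
    have e2 : (-1:ℤ)^((i+1) + l i) = -(-1:ℤ)^(l i + i) := by
      rw [add_comm, ← add_assoc, pow_succ]; ring
    rw [e1, e2] at h2
    rw [mul_add]
    rw [ihh] at *
    linarith [h2]

theorem disparity_formula (l : ℕ → ℕ) (hl : IsPartition l) (hsc : SelfConj l)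
    (r s : ℕ) (hr : r = Set.ncard (D1 l)) (hs : s = Set.ncard (D3 l)) :
    dp l = 2 * ((r : ℤ) + s) ^ 2 - ((r : ℤ) + s) + 2 * s - 8 * r * s := by
  classical
  set d := durfee l with hd
  set F : ℕ → ℤ := fun i => (-1:ℤ)^(l i + i) with hF
  have hbox : ∀ i j, j < l i ↔ i < l j := box_symm l hl hsc
  have hdre : ∀ i, i < l i ↔ i < d := durfee_iff l hl
  set n0 := l 0 with hn0
  have hrow_n0 : ∀ i, l i ≤ n0 := fun i => hl.1 (Nat.zero_le i)
  have hdn0 : d ≤ n0 := by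
    rcases Nat.eq_zero_or_pos d with h | h
    · omega
    · exact durfee_le_row l hl 0 h
  have hdle : ∀ i, i < d → d ≤ l i := fun i hi => durfee_le_row l hl i hi
  have hled : ∀ i, d ≤ i → l i ≤ d := fun i hi => row_le_durfee l hl hsc i hi
  have hRange : ∀ b c : ℕ, b ≤ c →
      (∑ j ∈ Finset.range c, F j) = ∑ j ∈ Finset.range b, F j + ∑ j ∈ Finset.Ico b c, F j := by
    intro b c h
    simp only [Finset.range_eq_Ico]
    exact (Finset.sum_Ico_consecutive F (Nat.zero_le b) h).symm
  -- the square and the diagram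
  set sq : Finset (ℕ × ℕ) := Finset.range n0 ×ˢ Finset.range n0 with hsq
  set D : Finset (ℕ × ℕ) := sq.filter (fun p : ℕ × ℕ => p.2 < l p.1) with hD
  have hmemD : ∀ p : ℕ × ℕ, p ∈ D ↔ p.2 < l p.1 := by
    intro p
    simp only [hD, Finset.mem_filter, hsq, Finset.mem_product, Finset.mem_range]
    constructor
    · tauto
    · intro h
      exact ⟨⟨lt_of_lt_of_le ((hbox _ _).mp h) (hrow_n0 _), lt_of_lt_of_le h (hrow_n0 _)⟩, h⟩
  -- dp as a signed sum
  have hdp1 : dp l = ∑ p ∈ D, (if Odd (hookLen l p.1 p.2) then (1:ℤ) else -1) := by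
    have hsetodd : {p : ℕ × ℕ | p.2 < l p.1 ∧ Odd (hookLen l p.1 p.2)} =
        ↑(D.filter (fun p => Odd (hookLen l p.1 p.2))) := by
      ext p
      simp only [Set.mem_setOf_eq, Finset.coe_filter, Finset.mem_coe]
      constructor
      · rintro ⟨h1, h2⟩; exact ⟨(hmemD p).mpr h1, h2⟩
      · rintro ⟨h1, h2⟩; exact ⟨(hmemD p).mp h1, h2⟩
    have hseteven : {p : ℕ × ℕ | p.2 < l p.1 ∧ Even (hookLen l p.1 p.2)} =
        ↑(D.filter (fun p => Even (hookLen l p.1 p.2))) := by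
      ext p
      simp only [Set.mem_setOf_eq, Finset.coe_filter, Finset.mem_coe]
      constructor
      · rintro ⟨h1, h2⟩; exact ⟨(hmemD p).mpr h1, h2⟩
      · rintro ⟨h1, h2⟩; exact ⟨(hmemD p).mp h1, h2⟩
    have hc : D.filter (fun p => ¬ Odd (hookLen l p.1 p.2)) =
        D.filter (fun p => Even (hookLen l p.1 p.2)) := by
      apply Finset.filter_congr
      intro p _
      simp [Nat.not_odd_iff_even]
    rw [dp, hsetodd, hseteven, Set.ncard_coe_finset, Set.ncard_coe_finset,
      Finset.sum_ite, Finset.sum_const, Finset.sum_const, hc]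
    simp only [nsmul_eq_mul, mul_one, mul_neg]
    ring
  have hdp2 : dp l = ∑ p ∈ D, F p.1 * F p.2 := by
    rw [hdp1]
    apply Finset.sum_congr rfl
    intro p hp
    have hb := (hmemD p).mp hp
    have hb2 := (hbox p.1 p.2).mp hb
    have heq : hookLen l p.1 p.2 + (p.1 + p.2 + 1) = l p.1 + l p.2 := by
      unfold hookLen
      rw [congrFun hsc p.2]
      omega
    have hFF : F p.1 * F p.2 = -(-1:ℤ)^(hookLen l p.1 p.2) := by
      simp only [hF]
      rw [← pow_add]
      have h2 : l p.1 + p.1 + (l p.2 + p.2) = (hookLen l p.1 p.2 + 2*(p.1+p.2)) + 1 := by omega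
      rw [h2, pow_succ, pow_add]
      have h3 : (-1:ℤ)^(2*(p.1+p.2)) = 1 := by
        rw [pow_mul]; norm_num
      rw [h3]; ring
    rw [hFF]
    rcases Nat.even_or_odd (hookLen l p.1 p.2) with h | h
    · rw [if_neg (by rwa [Nat.not_odd_iff_even]), h.neg_one_pow]
    · rw [if_pos h, h.neg_one_pow]; norm_num
  -- dp as a double sum
  have hdp3 : dp l = ∑ i ∈ Finset.range n0, F i * ∑ j ∈ Finset.range (l i), F j := by
    rw [hdp2, hD, Finset.sum_filter, hsq, Finset.sum_product]
    apply Finset.sum_congr rfl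
    intro i _
    have h1 : ∀ j ∈ Finset.range n0, (if (i, j).2 < l (i, j).1 then F (i, j).1 * F (i, j).2 else 0)
        = F i * (if j < l i then F j else 0) := by
      intro j _
      by_cases h : j < l i <;> simp [h]
    rw [Finset.sum_congr rfl h1, ← Finset.mul_sum, aux_sum_ite_range F (l i) n0 (hrow_n0 i)]
  set x : ℤ := ∑ j ∈ Finset.range d, F j with hx
  -- split the outer sum
  have hsplit : dp l = (∑ i ∈ Finset.range d, F i * ∑ j ∈ Finset.range (l i), F j)
      + ∑ i ∈ Finset.Ico d n0, F i * ∑ j ∈ Finset.range (l i), F j := by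
    rw [hdp3, Finset.range_eq_Ico, ← Finset.sum_Ico_consecutive _ (Nat.zero_le d) hdn0,
      ← Finset.range_eq_Ico]
  -- region A
  have hA : ∑ i ∈ Finset.range d, F i * ∑ j ∈ Finset.range (l i), F j
      = x * x + ∑ i ∈ Finset.range d, F i * ∑ j ∈ Finset.Ico d (l i), F j := by
    have h1 : ∀ i ∈ Finset.range d, F i * ∑ j ∈ Finset.range (l i), F j
        = F i * x + F i * ∑ j ∈ Finset.Ico d (l i), F j := by
      intro i hi
      rw [Finset.mem_range] at hi
      rw [hRange d (l i) (hdle i hi), ← hx]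
      ring
    rw [Finset.sum_congr rfl h1, Finset.sum_add_distrib, ← Finset.sum_mul, ← hx]
  -- region B
  have hB : ∑ i ∈ Finset.Ico d n0, F i * ∑ j ∈ Finset.range (l i), F j
      = ∑ j ∈ Finset.range d, F j * ∑ i ∈ Finset.Ico d (l j), F i := by
    have h1 : ∀ i ∈ Finset.Ico d n0, F i * ∑ j ∈ Finset.range (l i), F j
        = ∑ j ∈ Finset.range d, (if j < l i then F i * F j else 0) := by
      intro i hi
      rw [Finset.mem_Ico] at hi
      rw [← aux_sum_ite_range F (l i) d (hled i hi.1), Finset.mul_sum]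
      apply Finset.sum_congr rfl
      intro j _
      by_cases h : j < l i <;> simp [h]
    rw [Finset.sum_congr rfl h1, Finset.sum_comm]
    apply Finset.sum_congr rfl
    intro j hj
    rw [Finset.mem_range] at hj
    have h2 : ∀ i ∈ Finset.Ico d n0, (if j < l i then F i * F j else 0)
        = (if i < l j then F j * F i else 0) := by
      intro i _
      by_cases h : j < l i
      · rw [if_pos h, if_pos ((hbox i j).mp h), mul_comm]
      · rw [if_neg h, if_neg (fun hc => h ((hbox i j).mpr hc))]
    rw [Finset.sum_congr rfl h2,
      aux_sum_ite_Ico (fun k => F j * F k) d (l j) n0 (hdle j hj) (hrow_n0 j),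
      ← Finset.mul_sum]
  -- key hook-walk identity
  have hkey : ∀ i ∈ Finset.range d, 2 * ∑ j ∈ Finset.Ico d (l i), F j
      = 2 * ∑ k ∈ Finset.Ico (i+1) d, F k + 1 + F i := by
    intro i hi
    rw [Finset.mem_range] at hi
    exact key_T l hl hsc (d - i - 1) i (by omega)
  have htail : ∀ i ∈ Finset.range d, ∑ k ∈ Finset.Ico (i+1) d, F k
      = x - (∑ k ∈ Finset.range i, F k) - F i := by
    intro i hi
    rw [Finset.mem_range] at hi
    have h0 : ∑ j ∈ Finset.range (i+1), F j = ∑ k ∈ Finset.range i, F k + F i :=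
      Finset.sum_range_succ F i
    have h1 : ∑ j ∈ Finset.range d, F j
        = ∑ j ∈ Finset.range (i+1), F j + ∑ k ∈ Finset.Ico (i+1) d, F k :=
      hRange (i+1) d (by omega)
    rw [hx]
    linarith
  have hFsq : ∀ i, F i * F i = 1 := fun i => neg_one_pow_self_mul (l i + i)
  -- sum the key identity
  have hmain : 2 * ∑ i ∈ Finset.range d, F i * ∑ j ∈ Finset.Ico d (l i), F j = x * x + x := by
    have h1 : ∀ i ∈ Finset.range d, 2 * (F i * ∑ j ∈ Finset.Ico d (l i), F j)
        = 2 * (F i * x) - 2 * (F i * ∑ k ∈ Finset.range i, F k) - 1 + F i := by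
      intro i hi
      have h2 := hkey i hi
      rw [htail i hi] at h2
      have h4 := hFsq i
      calc 2 * (F i * ∑ j ∈ Finset.Ico d (l i), F j)
          = F i * (2 * ∑ j ∈ Finset.Ico d (l i), F j) := by ring
        _ = F i * (2 * (x - (∑ k ∈ Finset.range i, F k) - F i) + 1 + F i) := by rw [h2]
        _ = 2 * (F i * x) - 2 * (F i * ∑ k ∈ Finset.range i, F k)
            - 2 * (F i * F i) + F i + F i * F i := by ring
        _ = 2 * (F i * x) - 2 * (F i * ∑ k ∈ Finset.range i, F k) - 1 + F i := by
            rw [h4]; ring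
    rw [Finset.mul_sum, Finset.sum_congr rfl h1]
    have h5 : x ^ 2 = ∑ i ∈ Finset.range d, (F i)^2
        + 2 * ∑ i ∈ Finset.range d, F i * ∑ k ∈ Finset.range i, F k := aux_sq_sum F d
    have h6 : ∑ i ∈ Finset.range d, (F i)^2 = (d : ℤ) := by
      rw [Finset.sum_congr rfl (fun i _ => by rw [pow_two, hFsq i] : ∀ i ∈ Finset.range d, (F i)^2 = 1)]
      simp
    have h7 : ∑ i ∈ Finset.range d,
        (2 * (F i * x) - 2 * (F i * ∑ k ∈ Finset.range i, F k) - 1 + F i)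
        = 2 * (∑ i ∈ Finset.range d, F i * x)
          - 2 * (∑ i ∈ Finset.range d, F i * ∑ k ∈ Finset.range i, F k)
          - (d:ℤ) + ∑ i ∈ Finset.range d, F i := by
      rw [Finset.sum_add_distrib, Finset.sum_sub_distrib, Finset.sum_sub_distrib,
        ← Finset.mul_sum, ← Finset.mul_sum]
      simp
    have h8 : ∑ i ∈ Finset.range d, F i * x = x * x := by
      rw [← Finset.sum_mul, ← hx]
    rw [h7, h8, ← hx]
    nlinarith [h5, h6]
  have hdpx : dp l = 2 * x * x + x := by
    rw [hsplit, hA, hB]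
    linarith [hmain]
  -- identify x with s - r
  have hdiag : ∀ i, i < d → hookLen l i i = 2 * (l i - i) - 1 := by
    intro i hi
    have h1 : i < l i := (hdre i).mpr hi
    unfold hookLen
    rw [congrFun hsc i]
    omega
  have hinj : Set.InjOn (fun i => hookLen l i i) ↑(Finset.range d) := by
    intro a ha b hb hab
    simp only [Finset.coe_range, Set.mem_Iio] at ha hb
    simp only at hab
    rw [hdiag a ha, hdiag b hb] at hab
    have ha1 : a < l a := (hdre a).mpr ha
    have hb1 : b < l b := (hdre b).mpr hb
    rcases Nat.lt_trichotomy a b with h | h | h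
    · have := hl.1 h.le
      omega
    · exact h
    · have := hl.1 h.le
      omega
  have hcard1 : ∀ (c : ℕ) (pr : ℕ → Prop) [DecidablePred pr],
      (∀ i, i < d → (hookLen l i i % 4 = c ↔ pr i)) →
      {x | x ∈ Dset l ∧ x % 4 = c} = ↑(((Finset.range d).filter pr).image (fun i => hookLen l i i)) := by
    intro c pr _ hpr
    ext y
    simp only [Set.mem_setOf_eq, Finset.coe_image, Set.mem_image, Finset.mem_coe,
      Finset.mem_filter, Finset.mem_range, Dset]
    constructor
    · rintro ⟨⟨i, hi, rfl⟩, hy4⟩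
      have hid : i < d := (hdre i).mp hi
      exact ⟨i, ⟨hid, (hpr i hid).mp hy4⟩, rfl⟩
    · rintro ⟨i, ⟨hid, hpi⟩, rfl⟩
      exact ⟨⟨i, (hdre i).mpr hid, rfl⟩, (hpr i hid).mpr hpi⟩
  have hmod1 : ∀ i, i < d → (hookLen l i i % 4 = 1 ↔ (l i + i) % 2 = 1) := by
    intro i hi
    have h1 : i < l i := (hdre i).mpr hi
    rw [hdiag i hi]
    omega
  have hmod3 : ∀ i, i < d → (hookLen l i i % 4 = 3 ↔ (l i + i) % 2 = 0) := by
    intro i hi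
    have h1 : i < l i := (hdre i).mpr hi
    rw [hdiag i hi]
    omega
  have hrc : r = ((Finset.range d).filter (fun i => (l i + i) % 2 = 1)).card := by
    rw [hr]
    have h1 := hcard1 1 (fun i => (l i + i) % 2 = 1) hmod1
    rw [show D1 l = {x | x ∈ Dset l ∧ x % 4 = 1} from rfl, h1, Set.ncard_coe_finset]
    exact Finset.card_image_of_injOn (hinj.mono (Finset.coe_subset.mpr (Finset.filter_subset _ _)))
  have hsc2 : s = ((Finset.range d).filter (fun i => (l i + i) % 2 = 0)).card := by
    rw [hs]
    have h1 := hcard1 3 (fun i => (l i + i) % 2 = 0) hmod3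
    rw [show D3 l = {x | x ∈ Dset l ∧ x % 4 = 3} from rfl, h1, Set.ncard_coe_finset]
    exact Finset.card_image_of_injOn (hinj.mono (Finset.coe_subset.mpr (Finset.filter_subset _ _)))
  have hxrs : x = (s : ℤ) - r := by
    rw [hx]
    have h1 : ∀ i ∈ Finset.range d, F i = if (l i + i) % 2 = 0 then (1:ℤ) else -1 := by
      intro i _
      simp only [hF]
      rcases Nat.even_or_odd (l i + i) with h | h
      · rw [if_pos (Nat.even_iff.mp h), h.neg_one_pow]
      · have h2 := Nat.odd_iff.mp h
        rw [if_neg (by omega), Odd.neg_one_pow h]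
    rw [Finset.sum_congr rfl h1, Finset.sum_ite, Finset.sum_const, Finset.sum_const]
    have h2 : (Finset.range d).filter (fun i => ¬ ((l i + i) % 2 = 0))
        = (Finset.range d).filter (fun i => (l i + i) % 2 = 1) := by
      apply Finset.filter_congr
      intro i _
      constructor
      · intro h; omega
      · intro h; omega
    rw [h2, hrc, hsc2]
    simp only [nsmul_eq_mul, mul_one, mul_neg]
    push_cast
    ring
  rw [hdpx, hxrs]
  ring
end

section
/- For every self-conjugate partition λ, the disparity dp(λ) = |{(i,j) ∈ λ : h(i,j) odd}| − |{(i,j) ∈ λ : h(i,j) even}| is a triangular number, i.e., dp(λ) = m(m+1)/2 for some nonnegative integer m. -/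
def sg (n : ℕ) : ℤ := if n % 2 = 0 then -1 else 1

lemma sg_congr {m n : ℕ} (h : m % 2 = n % 2) : sg m = sg n := by unfold sg; rw [h]

lemma sg_eq (n : ℕ) : sg n = if Odd n then 1 else -1 := by
  rcases Nat.mod_two_eq_zero_or_one n with h | h <;>
    simp [sg, h, Nat.odd_iff]

lemma lower_iff (S : Set ℕ) (hf : S.Finite) (hdc : ∀ a b : ℕ, a ≤ b → b ∈ S → a ∈ S) (i : ℕ) :
    i ∈ S ↔ i < S.ncard := by
  constructor
  · intro hi
    have h1 : Set.Iic i ⊆ S := fun a ha => hdc a i ha hi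
    have h2 := Set.ncard_le_ncard h1 hf
    have h3 : (Set.Iic i).ncard = i + 1 := by
      rw [← Finset.coe_Iic, Set.ncard_coe_finset]; simp
    omega
  · intro hi
    by_contra hco
    have h1 : S ⊆ Set.Iio i := by
      intro b hb
      simp only [Set.mem_Iio]
      by_contra hbi
      push_neg at hbi
      exact hco (hdc i b hbi hb)
    have h2 := Set.ncard_le_ncard h1 (Set.finite_Iio i)
    have h3 : (Set.Iio i).ncard = i := by
      rw [← Finset.coe_Iio, Set.ncard_coe_finset]; simp
    omega

lemma conj_lt_iff (l : ℕ → ℕ) (hA : Antitone l) (hN : ∃ N, l N = 0) (i j : ℕ) :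
    i < conj l j ↔ j < l i := by
  obtain ⟨N, hN⟩ := hN
  have hf : {i | j < l i}.Finite := by
    apply Set.Finite.subset (Set.finite_Iio N)
    intro x hx
    simp only [Set.mem_setOf_eq] at hx
    simp only [Set.mem_Iio]
    by_contra h
    push_neg at h
    have := hA h
    omega
  have h := lower_iff _ hf (fun a b hab hb => lt_of_lt_of_le hb (hA hab)) i
  simp only [Set.mem_setOf_eq] at h
  rw [conj]
  exact h.symm

lemma durfee_lt_iff (l : ℕ → ℕ) (hA : Antitone l) (hN : ∃ N, l N = 0) (i : ℕ) :
    i < durfee l ↔ i < l i := by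
  obtain ⟨N, hN⟩ := hN
  have hf : {i | i < l i}.Finite := by
    apply Set.Finite.subset (Set.finite_Iio N)
    intro x hx
    simp only [Set.mem_setOf_eq] at hx
    simp only [Set.mem_Iio]
    by_contra h
    push_neg at h
    have := hA h
    omega
  have h := lower_iff _ hf (fun a b hab hb => by
    simp only [Set.mem_setOf_eq] at *
    calc a ≤ b := hab
    _ < l b := hb
    _ ≤ l a := hA hab) i
  simp only [Set.mem_setOf_eq] at h
  rw [durfee]
  exact h.symm

lemma lt_iff' (l : ℕ → ℕ) (hA : Antitone l) (hN : ∃ N, l N = 0) (hsc : conj l = l) (i j : ℕ) :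
    i < l j ↔ j < l i := by
  conv_lhs => rw [← hsc]
  exact conj_lt_iff l hA hN i j

lemma hook_symm (l : ℕ → ℕ) (hsc : conj l = l) (i j : ℕ) :
    hookLen l i j = hookLen l j i := by
  unfold hookLen
  rw [hsc]
  omega

section Mu
variable (l : ℕ → ℕ) (hA : Antitone l) (hN : ∃ N, l N = 0) (hsc : conj l = l)

include hA in
lemma mu_anti : Antitone (fun k => l (k + 1) - 1) := by
  intro a b hab
  have := hA (Nat.add_le_add_right hab 1)
  simp only
  omega

include hA hN in
lemma mu_zero : ∃ N, l (N + 1) - 1 = 0 := by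
  obtain ⟨N, hN⟩ := hN
  have h2 : l (N + 1) ≤ l N := hA (Nat.le_succ N)
  exact ⟨N, by omega⟩

include hA hN hsc in
lemma mu_conj : conj (fun k => l (k + 1) - 1) = fun k => l (k + 1) - 1 := by
  funext j
  have hset : {i | j < l (i + 1) - 1} = Set.Iio (l (j + 1) - 1) := by
    ext i
    simp only [Set.mem_setOf_eq, Set.mem_Iio]
    constructor
    · intro h
      have h2 : j + 1 < l (i + 1) := by omega
      have h3 : i + 1 < l (j + 1) := (lt_iff' l hA hN hsc _ _).mpr h2
      omega
    · intro h
      have h2 : i + 1 < l (j + 1) := by omega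
      have h3 : j + 1 < l (i + 1) := (lt_iff' l hA hN hsc _ _).mp h2
      omega
  rw [conj]
  show Set.ncard {i | j < l (i + 1) - 1} = _
  rw [hset, ← Finset.coe_Iio, Set.ncard_coe_finset]
  simp

include hA hN hsc in
lemma mu_hook (i j : ℕ) :
    hookLen (fun k => l (k + 1) - 1) i j = hookLen l (i + 1) (j + 1) := by
  unfold hookLen
  rw [mu_conj l hA hN hsc, hsc]
  simp only
  omega

include hA hN in
omit hsc in
lemma mu_durfee : durfee (fun k => l (k + 1) - 1) = durfee l - 1 := by
  have hset : {i | i < l (i + 1) - 1} = Set.Iio (durfee l - 1) := by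
    ext i
    simp only [Set.mem_setOf_eq, Set.mem_Iio]
    have h1 := durfee_lt_iff l hA hN (i + 1)
    omega
  rw [durfee]
  show Set.ncard {i | i < l (i + 1) - 1} = _
  rw [hset, ← Finset.coe_Iio, Set.ncard_coe_finset]
  simp

end Mu

lemma sum_sg_card (s : Finset (ℕ × ℕ)) (f : ℕ × ℕ → ℕ) :
    ∑ p ∈ s, sg (f p) =
      ((s.filter (fun p => Odd (f p))).card : ℤ) - ((s.filter (fun p => Even (f p))).card : ℤ) := by
  rw [← Finset.sum_filter_add_sum_filter_not s (fun p => Odd (f p))]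
  have h1 : ∀ p ∈ s.filter (fun p => Odd (f p)), sg (f p) = 1 := by
    intro p hp
    simp only [Finset.mem_filter] at hp
    rw [sg_eq, if_pos hp.2]
  have h2 : ∀ p ∈ s.filter (fun p => ¬ Odd (f p)), sg (f p) = -1 := by
    intro p hp
    simp only [Finset.mem_filter] at hp
    rw [sg_eq, if_neg hp.2]
  rw [Finset.sum_congr rfl h1, Finset.sum_congr rfl h2]
  have h3 : s.filter (fun p => ¬ Odd (f p)) = s.filter (fun p => Even (f p)) := by
    apply Finset.filter_congr
    intro p _
    simp [Nat.not_odd_iff_even]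
  rw [h3]
  simp only [Finset.sum_const, nsmul_eq_mul, mul_one, mul_neg_one]
  omega

lemma dp_eq_sum (l : ℕ → ℕ) (hA : Antitone l) (hN : ∃ N, l N = 0) (hsc : conj l = l)
    (M : ℕ) (hM : l 0 ≤ M) :
    dp l = ∑ i ∈ Finset.range M, ∑ j ∈ Finset.range (l i), sg (hookLen l i j) := by
  classical
  have key : ∀ p : ℕ × ℕ, p.2 < l p.1 → p.1 < M ∧ p.2 < M := by
    intro p hp
    constructor
    · have h1 : p.1 < l p.2 := (lt_iff' l hA hN hsc _ _).mpr hp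
      have h2 : l p.2 ≤ l 0 := hA (Nat.zero_le _)
      omega
    · have h2 : l p.1 ≤ l 0 := hA (Nat.zero_le _)
      omega
  set F := (Finset.range M ×ˢ Finset.range M).filter (fun p => p.2 < l p.1) with hF
  have hset : ∀ (P : ℕ → Prop) (_ : DecidablePred P), {p : ℕ × ℕ | p.2 < l p.1 ∧ P (hookLen l p.1 p.2)} =
      ↑(F.filter (fun p => P (hookLen l p.1 p.2))) := by
    intro P _inst
    ext ⟨i, j⟩
    simp only [Set.mem_setOf_eq, Finset.coe_filter, hF, Finset.mem_filter,
      Finset.mem_product, Finset.mem_range]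
    constructor
    · rintro ⟨h, hP⟩
      exact ⟨⟨⟨(key (i, j) h).1, (key (i, j) h).2⟩, h⟩, hP⟩
    · rintro ⟨⟨_, h⟩, hP⟩
      exact ⟨h, hP⟩
  have hdp : dp l = ((F.filter (fun p => Odd (hookLen l p.1 p.2))).card : ℤ) -
      ((F.filter (fun p => Even (hookLen l p.1 p.2))).card : ℤ) := by
    rw [dp, hset (fun n => Odd n) inferInstance, hset (fun n => Even n) inferInstance,
      Set.ncard_coe_finset, Set.ncard_coe_finset]
  rw [hdp, ← sum_sg_card F (fun p => hookLen l p.1 p.2)]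
  rw [hF, Finset.sum_filter, Finset.sum_product]
  refine Finset.sum_congr rfl fun i hi => ?_
  rw [← Finset.sum_filter]
  have hli : l i ≤ M := le_trans (le_trans (hA (Nat.zero_le i)) hM) (le_refl M)
  congr 1
  ext j
  simp only [Finset.mem_filter, Finset.mem_range]
  omega

lemma sg_flip (n : ℕ) : sg (n + 1) = - sg n := by
  rcases Nat.mod_two_eq_zero_or_one n with h | h <;> simp [sg, Nat.add_mod, h]

lemma alt_sum (e n : ℕ) : ∑ k ∈ Finset.Ico e (e + n), sg (k + 1) =
    if Even n then 0 else sg (e + 1) := by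
  induction n with
  | zero => simp
  | succ n ihn =>
    rw [show e + (n + 1) = (e + n) + 1 from rfl,
      Finset.sum_Ico_succ_top (Nat.le_add_right e n), ihn]
    rcases Nat.even_or_odd n with h | h
    · rw [if_pos h, if_neg (by simp [Nat.even_add_one, h])]
      have : (e + n + 1) % 2 = (e + 1) % 2 := by
        rw [Nat.even_iff] at h; omega
      rw [sg_congr this]
      ring
    · rw [if_neg (by simp [Nat.odd_iff, Nat.odd_iff.mp h]), if_pos (by simp [Nat.even_add_one, Nat.not_even_iff_odd.mpr h])]
      have : (e + n + 1) % 2 = (e + 1 + 1) % 2 := by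
        rw [Nat.odd_iff] at h; omega
      rw [sg_congr this, sg_flip, sg_flip]
      ring_nf
      rw [sg_congr (show (1 + e) % 2 = (e + 1) % 2 by omega), sg_flip]
      ring

noncomputable def Dd (l : ℕ → ℕ) : ℤ := ∑ j ∈ Finset.range (durfee l), sg (l j + j)

lemma zero_case (l : ℕ → ℕ) (hA : Antitone l) (h0 : l 0 = 0) :
    dp l = 0 ∧ durfee l = 0 := by
  have hall : ∀ i, l i = 0 := fun i => by have := hA (Nat.zero_le i); omega
  constructor
  · simp [dp, hall]
  · simp [durfee, hall]

lemma master (A : ℕ) : ∀ l : ℕ → ℕ, Antitone l → (∃ N, l N = 0) → conj l = l → l 0 ≤ A →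
    dp l = Dd l * (2 * Dd l - 1) ∧
    ∑ j ∈ Finset.Ico (durfee l) (l 0), sg (l j + j) =
      if Odd (l 0) then Dd l - 1 else Dd l := by
  induction A with
  | zero =>
    intro l hA hN hsc hle
    have h0 : l 0 = 0 := by omega
    obtain ⟨hdp, hdf⟩ := zero_case l hA h0
    refine ⟨?_, ?_⟩
    · simp [hdp, Dd, hdf]
    · simp [h0, hdf, Dd, Nat.odd_iff]
  | succ A ih =>
    intro l hA hN hsc hle
    by_cases h0 : l 0 = 0
    · obtain ⟨hdp, hdf⟩ := zero_case l hA h0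
      refine ⟨?_, ?_⟩
      · simp [hdp, Dd, hdf]
      · simp [h0, hdf, Dd, Nat.odd_iff]
    -- now l 0 ≥ 1
    have ha1 : 1 ≤ l 0 := by omega
    set μ : ℕ → ℕ := fun k => l (k + 1) - 1 with hμdef
    have hAμ : Antitone μ := mu_anti l hA
    have hNμ : ∃ N, μ N = 0 := mu_zero l hA hN
    have hscμ : conj μ = μ := mu_conj l hA hN hsc
    have hdμ : durfee μ = durfee l - 1 := mu_durfee l hA hN
    have hμ0 : μ 0 = l 1 - 1 := rfl
    have he_le : l 1 ≤ l 0 := hA (Nat.zero_le 1)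
    have hleμ : μ 0 ≤ A := by rw [hμ0]; omega
    have IH := ih μ hAμ hNμ hscμ hleμ
    have hpos : ∀ j, j < l 0 → 1 ≤ l j := fun j hj => (lt_iff' l hA hN hsc 0 j).mpr hj
    have hδ1 : 1 ≤ durfee l := (durfee_lt_iff l hA hN 0).mpr ha1
    have hδa : durfee l ≤ l 0 := by
      by_contra hc
      push_neg at hc
      have h1 := (durfee_lt_iff l hA hN (l 0)).mpr
      have h2 : l 0 < l (l 0) → False := by
        intro h
        have := hA (Nat.zero_le (l 0))
        omega
      exact h2 ((durfee_lt_iff l hA hN (l 0)).mp hc)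
    -- Dd μ = Dd l - sg (l 0)
    have hDpeel : Dd μ = Dd l - sg (l 0) := by
      have h1 : Dd l = ∑ j ∈ Finset.range ((durfee l - 1) + 1), sg (l j + j) := by
        rw [Dd, show (durfee l - 1) + 1 = durfee l by omega]
      rw [h1, Finset.sum_range_succ']
      have h2 : Dd μ = ∑ j ∈ Finset.range (durfee l - 1), sg (μ j + j) := by rw [Dd, hdμ]
      rw [h2]
      have h3 : ∀ j ∈ Finset.range (durfee l - 1), sg (μ j + j) = sg (l (j + 1) + (j + 1)) := by
        intro j hj
        simp only [Finset.mem_range] at hj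
        have hj2 : j + 1 < durfee l := by omega
        have hj3 : j + 1 < l 0 := by omega
        have := hpos (j + 1) hj3
        exact sg_congr (by simp only [hμdef]; omega)
      rw [Finset.sum_congr rfl h3]
      simp only [Nat.add_zero]
      ring
    -- W lemma for l
    have hW : ∑ j ∈ Finset.Ico (durfee l) (l 0), sg (l j + j) =
        if Odd (l 0) then Dd l - 1 else Dd l := by
      by_cases ha2 : l 0 = 1
      · have hδ : durfee l = 1 := by omega
        rw [ha2, hδ]
        simp only [Finset.Ico_self, Finset.sum_empty]
        have : Dd l = sg (l 0) := by
          rw [Dd, hδ]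
          simp
        rw [if_pos (by decide : Odd 1), this, ha2]
        simp [sg]
      -- l 0 ≥ 2
      · have ha2' : 2 ≤ l 0 := by omega
        have he1 : 1 ≤ l 1 := hpos 1 (by omega)
        have hδe : durfee l ≤ l 1 := by
          rcases Nat.lt_or_ge 1 (durfee l) with hd2 | hd2
          · have h1 : durfee l - 1 < l (durfee l - 1) :=
              (durfee_lt_iff l hA hN _).mp (by omega)
            have h2 : l (durfee l - 1) ≤ l 1 := hA (by omega)
            omega
          · omega
        have l_one : ∀ k, l 1 ≤ k → k < l 0 → l k = 1 := by
          intro k hk1 hk2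
          have h1 : 1 ≤ l k := hpos k hk2
          by_contra hc
          have h2 : 1 < l k := by omega
          have h3 : k < l 1 := (lt_iff' l hA hN hsc 1 k).mp h2
          omega
        rw [← Finset.sum_Ico_consecutive _ hδe (he_le)]
        -- part 2
        have hpart2 : ∑ j ∈ Finset.Ico (l 1) (l 0), sg (l j + j) =
            if Even (l 0 - l 1) then 0 else sg (l 1 + 1) := by
          have h1 : ∀ j ∈ Finset.Ico (l 1) (l 0), sg (l j + j) = sg (j + 1) := by
            intro j hj
            simp only [Finset.mem_Ico] at hj
            rw [l_one j hj.1 hj.2]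
            exact sg_congr (by omega)
          rw [Finset.sum_congr rfl h1,
            show Finset.Ico (l 1) (l 0) = Finset.Ico (l 1) (l 1 + (l 0 - l 1)) by
              congr 1; omega,
            alt_sum]
        rw [hpart2]
        -- part 1 : reindex to μ
        have hpart1 : ∑ j ∈ Finset.Ico (durfee l) (l 1), sg (l j + j) =
            if Odd (l 1 - 1) then Dd μ - 1 else Dd μ := by
          rw [← IH.2, hdμ, hμ0]
          have h1 : ∀ j ∈ Finset.Ico (durfee l - 1) (l 1 - 1),
              sg (μ j + j) = sg (l (j + 1) + (j + 1)) := by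
            intro j hj
            simp only [Finset.mem_Ico] at hj
            have hj3 : j + 1 < l 0 := by omega
            have := hpos (j + 1) hj3
            exact sg_congr (by simp only [hμdef]; omega)
          rw [Finset.sum_congr rfl h1]
          rw [Finset.sum_Ico_eq_sum_range, Finset.sum_Ico_eq_sum_range]
          rw [show l 1 - 1 - (durfee l - 1) = l 1 - durfee l by omega]
          refine Finset.sum_congr rfl fun i hi => ?_
          have hidx : durfee l - 1 + i + 1 = durfee l + i := by omega
          rw [hidx]
        rw [hpart1, hDpeel]
        -- case analysis on parities
        have hOe : Odd (l 1 - 1) ↔ ¬ Odd (l 1) := by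
          rw [Nat.odd_iff, Nat.odd_iff]; omega
        rcases Nat.even_or_odd (l 0) with hap | hap <;>
          rcases Nat.even_or_odd (l 1) with hep | hep
        · -- a even, e even
          rw [Nat.even_iff] at hap hep
          rw [if_pos (hOe.mpr (by rw [Nat.odd_iff]; omega)),
            if_pos (by rw [Nat.even_iff]; omega),
            if_neg (by rw [Nat.odd_iff]; omega)]
          have : sg (l 0) = -1 := by simp [sg, hap]
          rw [this]; ring
        · -- a even, e odd
          rw [Nat.even_iff] at hap
          rw [Nat.odd_iff] at hep
          rw [if_neg (by rw [hOe, Nat.odd_iff]; omega; ),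
            if_neg (by rw [Nat.even_iff]; omega),
            if_neg (by rw [Nat.odd_iff]; omega)]
          have h4 : sg (l 0) = -1 := by simp [sg, hap]
          have h5 : sg (l 1 + 1) = -1 := by simp [sg, Nat.add_mod, hep]
          rw [h4, h5]; ring
        · -- a odd, e even
          rw [Nat.odd_iff] at hap
          rw [Nat.even_iff] at hep
          rw [if_pos (hOe.mpr (by rw [Nat.odd_iff]; omega)),
            if_neg (by rw [Nat.even_iff]; omega),
            if_pos (by rw [Nat.odd_iff]; omega)]
          have h4 : sg (l 0) = 1 := by simp [sg, hap]
          have h5 : sg (l 1 + 1) = 1 := by simp [sg, Nat.add_mod, hep]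
          rw [h4, h5]; ring
        · -- a odd, e odd
          rw [Nat.odd_iff] at hap hep
          rw [if_neg (by rw [hOe, Nat.odd_iff]; omega),
            if_pos (by rw [Nat.even_iff]; omega),
            if_pos (by rw [Nat.odd_iff]; omega)]
          have h4 : sg (l 0) = 1 := by simp [sg, hap]
          rw [h4]; ring
    refine ⟨?_, hW⟩
    -- dp recursion
    obtain ⟨n, hn⟩ : ∃ n, l 0 = n + 1 := ⟨l 0 - 1, by omega⟩
    have hdpl := dp_eq_sum l hA hN hsc (l 0) le_rfl
    have hdpμ := dp_eq_sum μ hAμ hNμ hscμ n (by rw [hμ0]; omega)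
    -- T
    set T : ℤ := ∑ j ∈ Finset.range (l 0), sg (hookLen l 0 j) with hT
    have hrec : dp l = dp μ + 2 * T - 1 := by
      rw [hdpl]
      rw [show Finset.range (l 0) = Finset.range (n + 1) by rw [hn]]
      rw [Finset.sum_range_succ']
      have hinner : ∀ i ∈ Finset.range n,
          ∑ j ∈ Finset.range (l (i + 1)), sg (hookLen l (i + 1) j) =
          (∑ j ∈ Finset.range (μ i), sg (hookLen μ i j)) + sg (hookLen l 0 (i + 1)) := by
        intro i hi
        simp only [Finset.mem_range] at hi
        have hli : 1 ≤ l (i + 1) := hpos (i + 1) (by omega)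
        rw [show l (i + 1) = μ i + 1 by simp only [hμdef]; omega]
        rw [Finset.sum_range_succ']
        congr 1
        · refine Finset.sum_congr rfl fun j _ => ?_
          rw [mu_hook l hA hN hsc i j]
        · rw [hook_symm l hsc (i + 1) 0]
      rw [Finset.sum_congr rfl hinner, Finset.sum_add_distrib]
      have h2 : ∑ i ∈ Finset.range n, ∑ j ∈ Finset.range (μ i), sg (hookLen μ i j) = dp μ :=
        hdpμ.symm
      have hook00 : sg (hookLen l 0 0) = 1 := by
        have hc : conj l 0 = l 0 := congrFun hsc 0
        have : hookLen l 0 0 % 2 = 1 := by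
          rw [hookLen, hc]; omega
        simp [sg, this]
      have h3 : ∑ i ∈ Finset.range n, sg (hookLen l 0 (i + 1)) = T - 1 := by
        rw [hT, show Finset.range (l 0) = Finset.range (n + 1) by rw [hn],
          Finset.sum_range_succ', hook00]
        ring
      rw [h2, h3, ← hT]
      ring
    -- T in terms of parity sums
    have hTeq : ∀ j ∈ Finset.range (l 0), sg (hookLen l 0 j) = sg (l 0 + 1 + j + l j) := by
      intro j hj
      simp only [Finset.mem_range] at hj
      have hc : conj l j = l j := congrFun hsc j
      have hlj : 1 ≤ l j := hpos j hj
      refine sg_congr ?_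
      rw [hookLen, hc]
      omega
    have hVsplit : ∑ j ∈ Finset.range (l 0), sg (l j + j) =
        Dd l + ∑ j ∈ Finset.Ico (durfee l) (l 0), sg (l j + j) := by
      rw [Finset.range_eq_Ico, ← Finset.sum_Ico_consecutive _ (Nat.zero_le (durfee l)) hδa]
      congr 1
      rw [Dd, Finset.range_eq_Ico]
    have hdpμval := IH.1
    rcases Nat.even_or_odd (l 0) with hap | hap
    · -- l 0 even : T = -(2 Dd l)
      have hTval : T = - (2 * Dd l) := by
        rw [hT, Finset.sum_congr rfl hTeq]
        have h1 : ∀ j ∈ Finset.range (l 0), sg (l 0 + 1 + j + l j) = - sg (l j + j) := by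
          intro j _
          rw [Nat.even_iff] at hap
          rw [show l 0 + 1 + j + l j = (l j + j) + (l 0 + 1) by ring]
          have : ((l j + j) + (l 0 + 1)) % 2 = ((l j + j) + 1) % 2 := by omega
          rw [sg_congr this, sg_flip]
        rw [Finset.sum_congr rfl h1, Finset.sum_neg_distrib, hVsplit, hW,
          if_neg (by rw [Nat.even_iff] at hap; rw [Nat.odd_iff]; omega)]
        ring
      have hsga : sg (l 0) = -1 := by
        rw [Nat.even_iff] at hap; simp [sg, hap]
      rw [hrec, hdpμval, hDpeel, hTval, hsga]
      ring
    · -- l 0 odd : T = 2 Dd l - 1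
      have hTval : T = 2 * Dd l - 1 := by
        rw [hT, Finset.sum_congr rfl hTeq]
        have h1 : ∀ j ∈ Finset.range (l 0), sg (l 0 + 1 + j + l j) = sg (l j + j) := by
          intro j _
          rw [Nat.odd_iff] at hap
          exact sg_congr (by omega)
        rw [Finset.sum_congr rfl h1, hVsplit, hW, if_pos hap]
        ring
      have hsga : sg (l 0) = 1 := by
        rw [Nat.odd_iff] at hap; simp [sg, hap]
      rw [hrec, hdpμval, hDpeel, hTval, hsga]
      ring

lemma tri_cast (m : ℕ) : ((m * (m + 1) / 2 : ℕ) : ℤ) * 2 = (m : ℤ) * ((m : ℤ) + 1) := by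
  have h2 : 2 ∣ m * (m + 1) := (Nat.even_mul_succ_self m).two_dvd
  have h3 : m * (m + 1) / 2 * 2 = m * (m + 1) := Nat.div_mul_cancel h2
  calc ((m * (m + 1) / 2 : ℕ) : ℤ) * 2 = ((m * (m + 1) / 2 * 2 : ℕ) : ℤ) := by
        rw [Nat.cast_mul]; norm_num
    _ = ((m * (m + 1) : ℕ) : ℤ) := by rw [h3]
    _ = (m : ℤ) * ((m : ℤ) + 1) := by push_cast; ring

theorem disparity_triangular (l : ℕ → ℕ) (hl : IsPartition l) (hsc : SelfConj l) :
    ∃ m : ℕ, dp l = ((m * (m + 1) / 2 : ℕ) : ℤ) := by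
  obtain ⟨hA, hN⟩ := hl
  have hmain := (master (l 0) l hA hN hsc le_rfl).1
  set D := Dd l with hD
  rcases le_or_gt 1 D with hd | hd
  · refine ⟨(2 * D - 1).toNat, ?_⟩
    have hm : ((2 * D - 1).toNat : ℤ) = 2 * D - 1 := Int.toNat_of_nonneg (by omega)
    have h3 := tri_cast (2 * D - 1).toNat
    rw [hm] at h3
    have h4 : ((((2 * D - 1).toNat) * ((2 * D - 1).toNat + 1) / 2 : ℕ) : ℤ) * 2 =
        (D * (2 * D - 1)) * 2 := by rw [h3]; ring
    rw [hmain]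
    linarith
  · refine ⟨(-(2 * D)).toNat, ?_⟩
    have hm : ((-(2 * D)).toNat : ℤ) = -(2 * D) := Int.toNat_of_nonneg (by omega)
    have h3 := tri_cast (-(2 * D)).toNat
    rw [hm] at h3
    have h4 : ((((-(2 * D)).toNat) * ((-(2 * D)).toNat + 1) / 2 : ℕ) : ℤ) * 2 =
        (D * (2 * D - 1)) * 2 := by rw [h3]; ring
    rw [hmain]
    linarith
end

section
/- For a self-conjugate partition λ, let k = |D_1(λ)| − |D_3(λ)| where D_1(λ), D_3(λ) are the sets of main diagonal hook lengths congruent to 1 and 3 mod 4 respectively. If k ≥ 1, then dp(λ) = k(2k−1); if k ≤ 0, then dp(λ) = |k|(2|k|+1). -/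
lemma lt_conj_iff {l : ℕ → ℕ} (hl : IsPartition l) (i j : ℕ) :
    i < conj l j ↔ j < l i := by
  obtain ⟨ha, N, hN⟩ := hl
  have hne : {x | l x ≤ j}.Nonempty := ⟨N, by simp [hN]⟩
  set c := sInf {x | l x ≤ j} with hc
  have hiff : ∀ x, j < l x ↔ x < c := by
    intro x
    constructor
    · intro hx
      by_contra hcx
      push_neg at hcx
      have h1 : l x ≤ l c := ha hcx
      have h2 : l c ≤ j := Nat.sInf_mem hne
      omega
    · intro hx
      by_contra hj
      push_neg at hj
      exact absurd (Nat.sInf_le (show x ∈ {x | l x ≤ j} from hj)) (by omega)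
  have hconj : conj l j = c := by
    have hset : {x | j < l x} = ↑(Finset.range c) := by
      rw [Finset.coe_range]
      ext x
      simpa using hiff x
    rw [conj, hset, Set.ncard_coe_finset, Finset.card_range]
  rw [hconj]
  exact (hiff i).symm

def Sgn (l : ℕ → ℕ) (i : ℕ) : ℤ := (-1) ^ (l i + i)

noncomputable def Kk (l : ℕ → ℕ) : ℤ :=
  -∑ i ∈ Finset.range (l 0), if i < l i then Sgn l i else 0

noncomputable def Gg (l : ℕ → ℕ) : ℤ := ∑ j ∈ Finset.range (l 0), Sgn l j

noncomputable def SS (l : ℕ → ℕ) : ℤ :=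
  ∑ i ∈ Finset.range (l 0), ∑ j ∈ Finset.range (l 0),
    if j < l i then Sgn l i * Sgn l j else 0

def PSym (l : ℕ → ℕ) : Prop := ∀ i j, j < l i ↔ i < l j

lemma sum_neg_one_pow (t : ℕ) :
    ∑ j ∈ Finset.range t, (-1 : ℤ) ^ j = ((t % 2 : ℕ) : ℤ) := by
  induction t with
  | zero => simp
  | succ t ih =>
    rw [Finset.sum_range_succ, ih]
    rcases Nat.even_or_odd t with h | h
    · rw [h.neg_one_pow]
      have h2 := Nat.even_iff.1 h
      omega
    · rw [h.neg_one_pow]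
      have h2 := Nat.odd_iff.1 h
      omega

lemma key : ∀ n : ℕ, ∀ l : ℕ → ℕ, PSym l → l 0 = n →
    SS l = 2 * Kk l ^ 2 - Kk l ∧ Gg l = -2 * Kk l + ((l 0 % 2 : ℕ) : ℤ) := by
  intro n
  induction n using Nat.strong_induction_on with
  | _ n ih =>
  intro l hsym h0
  match n, h0 with
  | 0, h0 =>
    have hz : ∀ i, l i = 0 := by
      intro i
      have h := hsym i 0
      rw [h0] at h
      omega
    constructor <;> simp [SS, Kk, Gg, h0]
  | nn + 1, h0 =>
    set m : ℕ → ℕ := fun i => l (i + 1) - 1 with hmdef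
    have hsupp : ∀ i, 0 < l i ↔ i < l 0 := fun i => hsym i 0
    have hl10 : l 1 ≤ l 0 := by
      by_contra hcon
      push_neg at hcon
      have h2 := (hsym 1 (l 0)).mp hcon
      have h3 := (hsupp (l 0)).mp (by omega)
      omega
    have hm0n : m 0 ≤ nn := by
      have h5 : m 0 = l 1 - 1 := by norm_num [hmdef]
      omega
    have hm1 : ∀ i, i + 1 < l 0 → l (i + 1) = m i + 1 := by
      intro i hi
      have := (hsupp (i + 1)).mpr hi
      simp only [hmdef]
      omega
    have hlt : ∀ i j, (j < m i ↔ j + 1 < l (i + 1)) := by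
      intro i j; simp only [hmdef]; omega
    have hsymm : PSym m := by
      intro i j
      rw [hlt, hlt, hsym]
    have hmsupp : ∀ j, 0 < m j ↔ j < m 0 := fun j => hsymm j 0
    have hS : ∀ j, j + 1 < l 0 → Sgn l (j + 1) = Sgn m j := by
      intro j hj
      rw [Sgn, Sgn, hm1 j hj, show m j + 1 + (j + 1) = m j + j + 2 by ring, pow_add]
      norm_num
    obtain ⟨ihSS, ihG⟩ := ih (m 0) (by omega) m hsymm rfl
    have hK : Kk m = Kk l + Sgn l 0 := by
      have e1 : ∑ i ∈ Finset.range (l 0), (if i < l i then Sgn l i else 0)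
          = (∑ i ∈ Finset.range nn, if i + 1 < l (i + 1) then Sgn l (i + 1) else 0)
            + (if 0 < l 0 then Sgn l 0 else 0) := by
        rw [h0, Finset.sum_range_succ', h0]
      have e2 : ∀ i ∈ Finset.range nn,
          (if i + 1 < l (i + 1) then Sgn l (i + 1) else 0) = (if i < m i then Sgn m i else 0) := by
        intro i hi
        by_cases hc : i < m i
        · rw [if_pos ((hlt i i).mp hc), if_pos hc]
          apply hS
          have h4 := (hmsupp i).mp (by omega)
          omega
        · rw [if_neg (fun hcc => hc ((hlt i i).mpr hcc)), if_neg hc]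
      have e3 : ∑ i ∈ Finset.range nn, (if i < m i then Sgn m i else 0)
          = ∑ i ∈ Finset.range (m 0), (if i < m i then Sgn m i else 0) := by
        symm
        apply Finset.sum_subset (Finset.range_subset_range.mpr hm0n)
        intro x hx hxn
        rw [if_neg]
        intro hc
        exact hxn (Finset.mem_range.mpr ((hmsupp x).mp (by omega)))
      have e4 : Kk l = -((∑ i ∈ Finset.range (m 0), if i < m i then Sgn m i else 0) + Sgn l 0) := by
        rw [Kk, e1, Finset.sum_congr rfl e2, e3, if_pos (show 0 < l 0 by omega)]
      rw [e4, Kk]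
      ring
    have hG0 : Gg l = Sgn l 0 + ∑ j ∈ Finset.range nn, Sgn m j := by
      rw [Gg, h0, Finset.sum_range_succ',
        Finset.sum_congr rfl (fun j hj => hS j (by have := Finset.mem_range.mp hj; omega))]
      ring
    have hGm : ∑ j ∈ Finset.range nn, Sgn m j
        = Gg m + ((nn % 2 : ℕ) : ℤ) - ((m 0 % 2 : ℕ) : ℤ) := by
      rw [Finset.range_eq_Ico, ← Finset.sum_Ico_consecutive _ (Nat.zero_le (m 0)) hm0n]
      have hIco : ∑ j ∈ Finset.Ico (m 0) nn, Sgn m j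
          = ∑ j ∈ Finset.Ico (m 0) nn, (-1 : ℤ) ^ j := by
        apply Finset.sum_congr rfl
        intro j hj
        have h1 := Finset.mem_Ico.mp hj
        have h2 := (hmsupp j).mp
        have hjm : m j = 0 := by by_contra hcc; have := h2 (by omega); omega
        simp [Sgn, hjm]
      rw [hIco, Finset.sum_Ico_eq_sub _ hm0n, sum_neg_one_pow, sum_neg_one_pow,
        ← Finset.range_eq_Ico, Gg]
      ring
    have hparity : -Sgn l 0 + ((nn % 2 : ℕ) : ℤ) = (((nn + 1) % 2 : ℕ) : ℤ) := by
      rcases Nat.even_or_odd nn with he | ho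
      · have h1 : Odd (l 0 + 0) := by rw [h0]; rcases he with ⟨t, rfl⟩; exact ⟨t, by ring⟩
        rw [Sgn, h1.neg_one_pow]
        have h2 := Nat.even_iff.1 he
        have h3 : (nn + 1) % 2 = 1 := by omega
        rw [h2, h3]
        norm_num
      · have h1 : Even (l 0 + 0) := by rw [h0]; rcases ho with ⟨t, rfl⟩; exact ⟨t + 1, by ring⟩
        rw [Sgn, h1.neg_one_pow]
        have h2 := Nat.odd_iff.1 ho
        have h3 : (nn + 1) % 2 = 0 := by omega
        rw [h2, h3]
        norm_num
    have hG : Gg l = -2 * Kk l + (((nn + 1) % 2 : ℕ) : ℤ) := by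
      rw [hG0, hGm, ihG, hK]
      have : ((m 0 % 2 : ℕ) : ℤ) = ((m 0 % 2 : ℕ) : ℤ) := rfl
      linarith [hparity]
    have hsq : Sgn l 0 * Sgn l 0 = 1 := by
      rw [Sgn, ← pow_add]
      exact Even.neg_one_pow ⟨l 0 + 0, by ring⟩
    have hSS : SS l = SS m + 2 * Sgn l 0 * Gg l - 1 := by
      have hrow0 : ∑ j ∈ Finset.range (nn + 1), (if j < l 0 then Sgn l 0 * Sgn l j else 0)
          = Sgn l 0 * Gg l := by
        rw [Gg, h0, Finset.mul_sum]
        apply Finset.sum_congr rfl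
        intro j hj
        have := Finset.mem_range.mp hj
        rw [if_pos (by omega)]
      have hcol : ∑ i ∈ Finset.range nn, (if 0 < l (i + 1) then Sgn l (i + 1) * Sgn l 0 else 0)
          = (Gg l - Sgn l 0) * Sgn l 0 := by
        have e5 : ∀ i ∈ Finset.range nn,
            (if 0 < l (i + 1) then Sgn l (i + 1) * Sgn l 0 else 0) = Sgn m i * Sgn l 0 := by
          intro i hi
          have hmem := Finset.mem_range.mp hi
          rw [if_pos ((hsupp (i + 1)).mpr (by omega)), hS i (by omega)]
        have e6 : ∑ i ∈ Finset.range nn, Sgn m i = Gg l - Sgn l 0 := by rw [hG0]; ring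
        rw [Finset.sum_congr rfl e5, ← Finset.sum_mul, e6]
      have hinner : ∀ i ∈ Finset.range nn, ∀ j ∈ Finset.range nn,
          (if j + 1 < l (i + 1) then Sgn l (i + 1) * Sgn l (j + 1) else 0)
          = (if j < m i then Sgn m i * Sgn m j else 0) := by
        intro i hi j hj
        by_cases hc : j < m i
        · have hj0 : 0 < m j := by have := (hsymm i j).mp hc; omega
          have hi1 : i < m 0 := (hmsupp i).mp (by omega)
          have hj1 : j < m 0 := (hmsupp j).mp hj0
          rw [if_pos ((hlt i j).mp hc), if_pos hc, hS i (by omega), hS j (by omega)]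
        · rw [if_neg (fun hcc => hc ((hlt i j).mpr hcc)), if_neg hc]
      have hdouble : ∑ i ∈ Finset.range nn, ∑ j ∈ Finset.range nn,
          (if j < m i then Sgn m i * Sgn m j else 0) = SS m := by
        rw [SS]
        symm
        have hx : ∀ i, ∑ j ∈ Finset.range (m 0), (if j < m i then Sgn m i * Sgn m j else 0)
            = ∑ j ∈ Finset.range nn, (if j < m i then Sgn m i * Sgn m j else 0) := by
          intro i
          apply Finset.sum_subset (Finset.range_subset_range.mpr hm0n)
          intro x hx1 hx2
          rw [if_neg]
          intro hc
          have := (hsymm i x).mp hc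
          exact hx2 (Finset.mem_range.mpr ((hmsupp x).mp (by omega)))
        rw [Finset.sum_congr rfl (fun i _ => hx i)]
        apply Finset.sum_subset (Finset.range_subset_range.mpr hm0n)
        intro i hi1 hi2
        apply Finset.sum_eq_zero
        intro j hj
        rw [if_neg]
        intro hc
        exact hi2 (Finset.mem_range.mpr ((hmsupp i).mp (by omega)))
      have hsplit : SS l = (∑ i ∈ Finset.range nn, ∑ j ∈ Finset.range (nn + 1),
            if j < l (i + 1) then Sgn l (i + 1) * Sgn l j else 0)
          + ∑ j ∈ Finset.range (nn + 1), (if j < l 0 then Sgn l 0 * Sgn l j else 0) := by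
        rw [SS, h0, Finset.sum_range_succ', h0]
      have hin : ∀ i, (∑ j ∈ Finset.range (nn + 1),
            if j < l (i + 1) then Sgn l (i + 1) * Sgn l j else 0)
          = (∑ j ∈ Finset.range nn, if j + 1 < l (i + 1) then Sgn l (i + 1) * Sgn l (j + 1) else 0)
            + (if 0 < l (i + 1) then Sgn l (i + 1) * Sgn l 0 else 0) :=
        fun i => Finset.sum_range_succ' _ nn
      rw [hsplit, hrow0, Finset.sum_congr rfl (fun i _ => hin i), Finset.sum_add_distrib, hcol,
        Finset.sum_congr rfl (fun i hi => Finset.sum_congr rfl (fun j hj => hinner i hi j hj)),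
        hdouble]
      linear_combination -hsq
    constructor
    · rw [hSS, ihSS, hG, hK]
      rcases Nat.even_or_odd nn with he | ho
      · have h1 : Odd (l 0 + 0) := by rw [h0]; rcases he with ⟨t, rfl⟩; exact ⟨t, by ring⟩
        have hs0 : Sgn l 0 = -1 := by rw [Sgn, h1.neg_one_pow]
        have h2 := Nat.even_iff.1 he
        have h3 : (nn + 1) % 2 = 1 := by omega
        rw [hs0, h3]
        push_cast
        ring
      · have h1 : Even (l 0 + 0) := by rw [h0]; rcases ho with ⟨t, rfl⟩; exact ⟨t + 1, by ring⟩
        have hs0 : Sgn l 0 = 1 := by rw [Sgn, h1.neg_one_pow]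
        have h2 := Nat.odd_iff.1 ho
        have h3 : (nn + 1) % 2 = 0 := by omega
        rw [hs0, h3]
        push_cast
        ring
    · rw [h0]
      exact hG

lemma sum_pm {α : Type*} (s : Finset α) (P : α → Prop) [DecidablePred P] (f : α → ℤ)
    (hf : ∀ x ∈ s, f x = if P x then 1 else -1) :
    ∑ x ∈ s, f x = ((s.filter P).card : ℤ) - ((s.filter (fun x => ¬ P x)).card : ℤ) := by
  have h1 : ∀ x ∈ s.filter P, f x = 1 := fun x hx => by
    have h := Finset.mem_filter.mp hx
    rw [hf x h.1, if_pos h.2]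
  have h2 : ∀ x ∈ s.filter (fun x => ¬ P x), f x = -1 := fun x hx => by
    have h := Finset.mem_filter.mp hx
    rw [hf x h.1, if_neg h.2]
  rw [← Finset.sum_filter_add_sum_filter_not s P f, Finset.sum_congr rfl h1,
    Finset.sum_congr rfl h2, Finset.sum_const, Finset.sum_const]
  simp
  ring

lemma sym_of {l : ℕ → ℕ} (hl : IsPartition l) (hsc : SelfConj l) : PSym l := by
  intro i j
  have h := lt_conj_iff hl i j
  rw [hsc] at h
  exact h.symm

lemma dp_eq_SS {l : ℕ → ℕ} (hl : IsPartition l) (hsc : SelfConj l) : dp l = SS l := by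
  have hsym : PSym l := sym_of hl hsc
  have hsupp : ∀ i, 0 < l i ↔ i < l 0 := fun i => hsym i 0
  set Bf := (Finset.range (l 0) ×ˢ Finset.range (l 0)).filter (fun p : ℕ × ℕ => p.2 < l p.1)
    with hBf
  have hmem : ∀ p : ℕ × ℕ, p ∈ Bf ↔ p.2 < l p.1 := by
    intro p
    simp only [hBf, Finset.mem_filter, Finset.mem_product, Finset.mem_range]
    constructor
    · tauto
    · intro hp
      refine ⟨⟨(hsupp p.1).mp (by omega), ?_⟩, hp⟩
      have := (hsym p.1 p.2).mp hp
      exact (hsupp p.2).mp (by omega)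
  have hookformula : ∀ p : ℕ × ℕ, p.2 < l p.1 →
      (hookLen l p.1 p.2 % 2 = 1 ↔ (l p.1 + p.1 + (l p.2 + p.2)) % 2 = 0) := by
    intro p hp
    have h2 : p.1 + 1 ≤ l p.2 := (hsym p.1 p.2).mp hp
    rw [hookLen, hsc]
    omega
  have hset1 : {p : ℕ × ℕ | p.2 < l p.1 ∧ Odd (hookLen l p.1 p.2)}
      = ↑(Bf.filter (fun p => hookLen l p.1 p.2 % 2 = 1)) := by
    ext p
    simp [hmem p, Nat.odd_iff]
  have hset2 : {p : ℕ × ℕ | p.2 < l p.1 ∧ Even (hookLen l p.1 p.2)}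
      = ↑(Bf.filter (fun p => ¬ (hookLen l p.1 p.2 % 2 = 1))) := by
    ext p
    simp only [Set.mem_setOf_eq, Finset.coe_filter, hmem p, Nat.even_iff]
    constructor
    · rintro ⟨h1, h2⟩; exact ⟨h1, by omega⟩
    · rintro ⟨h1, h2⟩; exact ⟨h1, by omega⟩
  have hSS2 : SS l = ∑ p ∈ Bf, Sgn l p.1 * Sgn l p.2 := by
    rw [hBf, Finset.sum_filter, Finset.sum_product, SS]
  have hval : ∀ p ∈ Bf, Sgn l p.1 * Sgn l p.2
      = if hookLen l p.1 p.2 % 2 = 1 then 1 else -1 := by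
    intro p hp
    have hp' := (hmem p).mp hp
    have hiff := hookformula p hp'
    rw [Sgn, Sgn, ← pow_add]
    by_cases hc : hookLen l p.1 p.2 % 2 = 1
    · rw [if_pos hc]
      exact Even.neg_one_pow (Nat.even_iff.mpr (hiff.mp hc))
    · rw [if_neg hc]
      apply Odd.neg_one_pow
      rw [Nat.odd_iff]
      have h2 : ¬ ((l p.1 + p.1 + (l p.2 + p.2)) % 2 = 0) := fun h => hc (hiff.mpr h)
      omega
  rw [dp, hset1, hset2, Set.ncard_coe_finset, Set.ncard_coe_finset, hSS2,
    sum_pm Bf (fun p => hookLen l p.1 p.2 % 2 = 1) _ hval]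

lemma k_eq {l : ℕ → ℕ} (hl : IsPartition l) (hsc : SelfConj l) :
    (Set.ncard (D1 l) : ℤ) - (Set.ncard (D3 l) : ℤ) = Kk l := by
  have hsym := sym_of hl hsc
  have hsupp : ∀ i, 0 < l i ↔ i < l 0 := fun i => hsym i 0
  set Dg := (Finset.range (l 0)).filter (fun i => i < l i) with hDg
  have hmemD : ∀ i, i ∈ Dg ↔ i < l i := by
    intro i
    simp only [hDg, Finset.mem_filter, Finset.mem_range]
    constructor
    · tauto
    · intro h
      exact ⟨(hsupp i).mp (by omega), h⟩
  have hhook : ∀ i, i < l i → hookLen l i i = 2 * (l i - (i + 1)) + 1 := by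
    intro i hi
    rw [hookLen, hsc]
    omega
  have hinj : ∀ a b, a ∈ Dg → b ∈ Dg → a < b → hookLen l b b < hookLen l a a := by
    intro a b ha hb hab
    have ha' := (hmemD a).mp ha
    have hb' := (hmemD b).mp hb
    have hmono : l b ≤ l a := hl.1 hab.le
    rw [hhook a ha', hhook b hb']
    omega
  have hInj : Set.InjOn (fun i => hookLen l i i) ↑Dg := by
    intro a ha b hb hab
    have hab' : hookLen l a a = hookLen l b b := hab
    rcases lt_trichotomy a b with h | h | h
    · have := hinj a b (by simpa using ha) (by simpa using hb) h
      omega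
    · exact h
    · have := hinj b a (by simpa using hb) (by simpa using ha) h
      omega
  have hD1 : D1 l = ↑((Dg.filter (fun i => (l i + i) % 2 = 1)).image (fun i => hookLen l i i)) := by
    ext x
    simp only [D1, Dset, Set.mem_setOf_eq, Finset.coe_image, Set.mem_image, Finset.mem_coe,
      Finset.mem_filter]
    constructor
    · rintro ⟨⟨i, hi, rfl⟩, hmod⟩
      refine ⟨i, ⟨(hmemD i).mpr hi, ?_⟩, rfl⟩
      rw [hhook i hi] at hmod
      omega
    · rintro ⟨i, ⟨hi, hmod⟩, rfl⟩
      have hi' := (hmemD i).mp hi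
      refine ⟨⟨i, hi', rfl⟩, ?_⟩
      rw [hhook i hi']
      omega
  have hD3 : D3 l = ↑((Dg.filter (fun i => ¬ ((l i + i) % 2 = 1))).image
      (fun i => hookLen l i i)) := by
    ext x
    simp only [D3, Dset, Set.mem_setOf_eq, Finset.coe_image, Set.mem_image, Finset.mem_coe,
      Finset.mem_filter]
    constructor
    · rintro ⟨⟨i, hi, rfl⟩, hmod⟩
      refine ⟨i, ⟨(hmemD i).mpr hi, ?_⟩, rfl⟩
      rw [hhook i hi] at hmod
      omega
    · rintro ⟨i, ⟨hi, hmod⟩, rfl⟩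
      have hi' := (hmemD i).mp hi
      refine ⟨⟨i, hi', rfl⟩, ?_⟩
      rw [hhook i hi']
      omega
  have hc1 : Set.ncard (D1 l) = (Dg.filter (fun i => (l i + i) % 2 = 1)).card := by
    rw [hD1, Set.ncard_coe_finset]
    apply Finset.card_image_of_injOn
    apply hInj.mono
    intro x hx
    simp only [Finset.coe_filter, Set.mem_setOf_eq, Finset.mem_coe] at hx ⊢
    exact hx.1
  have hc3 : Set.ncard (D3 l) = (Dg.filter (fun i => ¬ ((l i + i) % 2 = 1))).card := by
    rw [hD3, Set.ncard_coe_finset]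
    apply Finset.card_image_of_injOn
    apply hInj.mono
    intro x hx
    simp only [Finset.coe_filter, Set.mem_setOf_eq, Finset.mem_coe] at hx ⊢
    exact hx.1
  have hKk : Kk l = ∑ i ∈ Dg, (-(Sgn l i)) := by
    have h7 : ∀ i ∈ Finset.range (l 0),
        (if i < l i then -(Sgn l i) else 0) = -(if i < l i then Sgn l i else 0) := by
      intro i _
      split <;> simp
    rw [hDg, Finset.sum_filter, Finset.sum_congr rfl h7, Kk, Finset.sum_neg_distrib]
  have hval : ∀ i ∈ Dg, -(Sgn l i) = if (l i + i) % 2 = 1 then 1 else -1 := by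
    intro i _
    rw [Sgn]
    by_cases hc : (l i + i) % 2 = 1
    · rw [if_pos hc, (Nat.odd_iff.mpr hc).neg_one_pow]
      ring
    · rw [if_neg hc, (Nat.even_iff.mpr (by omega)).neg_one_pow]
  rw [hc1, hc3, hKk, sum_pm Dg (fun i => (l i + i) % 2 = 1) _ hval]

theorem disparity_in_terms_of_k (l : ℕ → ℕ) (hl : IsPartition l) (hsc : SelfConj l)
    (k : ℤ) (hk : k = (Set.ncard (D1 l) : ℤ) - (Set.ncard (D3 l) : ℤ)) :
    (1 ≤ k → dp l = k * (2 * k - 1)) ∧ (k ≤ 0 → dp l = |k| * (2 * |k| + 1)) := by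
  have hsym := sym_of hl hsc
  obtain ⟨hSSe, -⟩ := key (l 0) l hsym rfl
  have hkK : k = Kk l := by rw [hk, k_eq hl hsc]
  have hdp : dp l = 2 * k ^ 2 - k := by rw [dp_eq_SS hl hsc, hSSe, hkK]
  constructor
  · intro _
    rw [hdp]
    ring
  · intro hkn
    rw [hdp, abs_of_nonpos hkn]
    ring
end

section
/- For each nonnegative integer m and nonnegative integer n, there is a bijection between the set of self-conjugate partitions of 4n + m(m+1)/2 whose main diagonal hook lengths satisfy |D_1| − |D_3| = (−1)^{m+1}⌈m/2⌉, and the set of all partitions of n. -/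
/-!
Cutting the `c`-Durfee rectangle (`b` rows with `l i - i > c`, `a = b + c` columns) out of a
partition leaves the rows `μ` to its right and the columns `ν` below it. The β-sets `E` of `ν`
(with `a` parts) and `O` of `μ` (with `b` parts) determine the partition, and every pair with
`#E - #O = c` occurs; merging them into `S = 2E ∪ (2O + 1)` gives every finite `S ⊆ ℕ` with
`#even - #odd = c`, and `2 ∑ S + #S = 4 |l| + 2c² - c`.

For a self-conjugate partition and `c = 0` (the Durfee square) one gets `E = O`, and the diagonal
hook lengths are the `2s + 1` with `s ∈ O`, so `|l| = 2 ∑ O + #O` and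
`|D₁| - |D₃| = #even O - #odd O`.
With `c = (-1)^(m+1) ⌈m/2⌉` one has `2c² - c = m(m+1)/2`, so both sides of the theorem are in
bijection with the finite `S ⊆ ℕ` with `2 ∑ S + #S = 4n + m(m+1)/2` and `#even - #odd = c`.
-/

open Finset

lemma IsLowerSet.eq_Iio_ncard {s : Set ℕ} (hs : IsLowerSet s) (hfin : s.Finite) :
    s = Set.Iio s.ncard := by
  obtain h | ⟨a, rfl⟩ := hs.eq_univ_or_Iio
  · exact absurd (h ▸ hfin) Set.infinite_univ
  · rw [Set.ncard_Iio_nat]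

lemma Finset.mem_iff_lt_card_of_isLowerSet {F : Finset ℕ} (hF : IsLowerSet (F : Set ℕ))
    {j : ℕ} : j ∈ F ↔ j < F.card := by
  rw [← mem_coe, hF.eq_Iio_ncard F.finite_toSet, Set.ncard_coe_finset, Set.mem_Iio]

lemma Antitone.tsub_const {f : ℕ → ℕ} (hf : Antitone f) (a : ℕ) :
    Antitone fun i => f i - a :=
  fun _ _ h => Nat.sub_le_sub_right (hf h) a

lemma card_filter_range_lt {n k : ℕ} (h : k ≤ n) : #{j ∈ range n | j < k} = k := by
  conv_rhs => rw [← card_range k]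
  congr 1
  ext j
  simp only [mem_filter, mem_range]
  omega

lemma sum_eq_sum_range_card_filter_lt {ι : Type*} (s : Finset ι) {f : ι → ℕ} {a : ℕ}
    (hf : ∀ i ∈ s, f i ≤ a) : ∑ i ∈ s, f i = ∑ j ∈ range a, #{i ∈ s | j < f i} := by
  simp only [card_filter]
  rw [sum_comm]
  refine sum_congr rfl fun i hi => ?_
  rw [← card_filter, card_filter_range_lt (hf i hi)]

namespace IsPartition

variable {l : ℕ → ℕ} (hl : IsPartition l)
include hl

lemma finite_setOf_lt (j : ℕ) : {i | j < l i}.Finite := by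
  obtain ⟨N, hN⟩ := hl.2
  refine (Set.finite_Iio N).subset fun i (hi : j < l i) => ?_
  by_contra h
  have := hl.1 (not_lt.mp h)
  omega

lemma setOf_lt_eq_Iio (j : ℕ) : {i | j < l i} = Set.Iio (conj l j) :=
  IsLowerSet.eq_Iio_ncard (fun _ _ hba ha => ha.trans_le (hl.1 hba)) (hl.finite_setOf_lt j)

lemma lt_conj_iff {i j : ℕ} : i < conj l j ↔ j < l i := by
  rw [← Set.mem_Iio, ← hl.setOf_lt_eq_Iio]
  rfl

lemma conj_antitone : Antitone (conj l) := fun _ _ h =>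
  Set.ncard_le_ncard (fun _ hi => h.trans_lt hi) (hl.finite_setOf_lt _)

lemma le_conj_of_forall_le {a b j : ℕ} (hge : ∀ i < b, a ≤ l i) (hj : j < a) :
    b ≤ conj l j :=
  not_lt.mp fun h => lt_irrefl _ (hl.lt_conj_iff.mpr (hj.trans_le (hge _ h)))

lemma conj_le_of_eq_zero {N j : ℕ} (hN : l N = 0) : conj l j ≤ N :=
  not_lt.mp fun h => by
    have := hl.lt_conj_iff.mp h
    omega

lemma psize_eq_sum {N : ℕ} (hN : l N = 0) : psize l = ∑ i ∈ range N, l i := by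
  have hcells :
      {p : ℕ × ℕ | p.2 < l p.1} = ↑{p ∈ range N ×ˢ range (l 0) | p.2 < l p.1} := by
    ext ⟨i, j⟩
    simp only [coe_filter, mem_product, mem_range, Set.mem_ofPred_eq]
    refine ⟨fun h => ⟨⟨?_, h.trans_le (hl.1 (Nat.zero_le i))⟩, h⟩, And.right⟩
    by_contra hi
    have := hl.1 (not_lt.mp hi)
    omega
  rw [psize, hcells, Set.ncard_coe_finset, card_filter, sum_product]
  refine sum_congr rfl fun i _ => ?_
  rw [← card_filter, card_filter_range_lt (hl.1 (Nat.zero_le i))]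

lemma psize_eq_of_rect {a b : ℕ} (hge : ∀ i < b, a ≤ l i)
    (hle : ∀ i, b ≤ i → l i ≤ a) :
    psize l = a * b + ∑ i ∈ range b, (l i - a) + ∑ j ∈ range a, (conj l j - b) := by
  obtain ⟨N, hN⟩ := hl.2
  have hNb : l (b + N) = 0 := Nat.eq_zero_of_le_zero (hN ▸ hl.1 (Nat.le_add_left N b))
  have hrows : ∑ i ∈ range b, l i = a * b + ∑ i ∈ range b, (l i - a) := by
    rw [← sum_congr rfl fun i hi => Nat.add_sub_of_le (hge i (mem_range.mp hi)), sum_add_distrib,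
      sum_const, card_range, smul_eq_mul, mul_comm]
  have hcols : ∑ k ∈ range N, l (b + k) = ∑ j ∈ range a, (conj l j - b) := by
    rw [sum_eq_sum_range_card_filter_lt _ fun k _ => hle _ (Nat.le_add_right b k)]
    refine sum_congr rfl fun j hj => ?_
    have hb := hl.le_conj_of_forall_le hge (mem_range.mp hj)
    have hN' := hl.conj_le_of_eq_zero (j := j) hNb
    rw [← card_range (conj l j - b)]
    congr 1
    ext k
    simp only [mem_filter, mem_range, ← hl.lt_conj_iff]
    omega
  rw [hl.psize_eq_sum hNb, sum_range_add, hrows, hcols]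

end IsPartition

/-- The elements of `T` in decreasing order; `0` past `T.card`. -/
noncomputable def descEnum (T : Finset ℕ) (i : ℕ) : ℕ :=
  if h : i < T.card then T.orderEmbOfFin rfl ⟨T.card - 1 - i, by omega⟩ else 0

section descEnum

variable {T : Finset ℕ} {i j : ℕ}

lemma descEnum_mem (hi : i < T.card) : descEnum T i ∈ T := by
  rw [descEnum, dif_pos hi]
  exact orderEmbOfFin_mem _ _ _

lemma descEnum_strictAntiOn : StrictAntiOn (descEnum T) (Set.Iio T.card) := by
  intro i hi j hj hij
  simp only [Set.mem_Iio] at hi hj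
  rw [descEnum, descEnum, dif_pos hi, dif_pos hj]
  exact (T.orderEmbOfFin rfl).strictMono (Fin.mk_lt_mk.mpr (by omega))

lemma image_descEnum : (range T.card).image (descEnum T) = T := by
  refine eq_of_subset_of_card_le (fun x hx => ?_) ?_
  · obtain ⟨i, hi, rfl⟩ := mem_image.mp hx
    exact descEnum_mem (mem_range.mp hi)
  · rw [card_image_of_injOn (by simpa using descEnum_strictAntiOn.injOn), card_range]

lemma descEnum_eq_of_strictAntiOn {f : ℕ → ℕ} (hf : StrictAntiOn f (Set.Iio T.card))
    (hmem : ∀ i < T.card, f i ∈ T) (hi : i < T.card) : descEnum T i = f i := by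
  have key : (fun k : Fin T.card => f (T.card - 1 - k)) = T.orderEmbOfFin rfl :=
    orderEmbOfFin_unique rfl (fun k => hmem _ (by omega))
      fun k k' hkk' => hf (by simp; omega) (by simp; omega) (by omega)
  rw [descEnum, dif_pos hi, ← key]
  dsimp only
  congr 1
  omega

lemma descEnum_add_sub_le (hij : i ≤ j) (hj : j < T.card) :
    descEnum T j + (j - i) ≤ descEnum T i := by
  induction j, hij using Nat.le_induction with
  | base => simp
  | succ j hij ih =>
    have := descEnum_strictAntiOn (T := T) (by simp; omega) hj (Nat.lt_succ_self j)
    have := ih (by omega)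
    omega

end descEnum

def betaSet (k : ℕ) (μ : ℕ → ℕ) : Finset ℕ := (range k).image fun i => μ i + (k - 1 - i)

noncomputable def partOfBeta (T : Finset ℕ) (i : ℕ) : ℕ := descEnum T i - (T.card - 1 - i)

section betaSet

variable {k : ℕ} {μ : ℕ → ℕ} {T : Finset ℕ} {i : ℕ}

lemma betaSet_congr {μ' : ℕ → ℕ} (h : ∀ i < k, μ i = μ' i) :
    betaSet k μ = betaSet k μ' :=
  image_congr fun i hi => by simp only [h i (by simpa using hi)]

lemma strictAntiOn_beta (hμ : Antitone μ) :
    StrictAntiOn (fun i => μ i + (k - 1 - i)) (Set.Iio k) := by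
  intro i hi j hj hij
  have := hμ hij.le
  simp only [Set.mem_Iio] at hi hj
  dsimp only
  omega

lemma card_betaSet (hμ : Antitone μ) : (betaSet k μ).card = k := by
  rw [betaSet, card_image_of_injOn (by simpa using (strictAntiOn_beta hμ).injOn), card_range]

lemma descEnum_betaSet (hμ : Antitone μ) (hi : i < k) :
    descEnum (betaSet k μ) i = μ i + (k - 1 - i) := by
  have hcard := card_betaSet (k := k) hμ
  refine descEnum_eq_of_strictAntiOn (f := fun i => μ i + (k - 1 - i)) ?_ (fun j hj => ?_)
    (by rwa [hcard])
  · rw [hcard]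
    exact strictAntiOn_beta hμ
  · rw [hcard] at hj
    exact mem_image_of_mem _ (mem_range.mpr hj)

lemma partOfBeta_betaSet (hμ : Antitone μ) (hi : i < k) : partOfBeta (betaSet k μ) i = μ i := by
  rw [partOfBeta, descEnum_betaSet hμ hi, card_betaSet hμ]
  omega

lemma descEnum_eq_partOfBeta_add (hi : i < T.card) :
    descEnum T i = partOfBeta T i + (T.card - 1 - i) := by
  have := descEnum_add_sub_le (T := T) (Nat.le_sub_one_of_lt hi) (by omega)
  rw [partOfBeta]
  omega

lemma partOfBeta_antitone : Antitone (partOfBeta T) := by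
  intro i j hij
  rcases lt_or_ge j T.card with hj | hj
  · have := descEnum_add_sub_le hij hj
    rw [partOfBeta, partOfBeta]
    omega
  · simp [partOfBeta, descEnum, not_lt.mpr hj]

lemma betaSet_partOfBeta : betaSet T.card (partOfBeta T) = T := by
  conv_rhs => rw [← image_descEnum (T := T)]
  exact image_congr fun i hi => (descEnum_eq_partOfBeta_add (by simpa using hi)).symm

lemma two_mul_sum_betaSet (hμ : Antitone μ) :
    2 * ∑ x ∈ betaSet k μ, x = 2 * ∑ i ∈ range k, μ i + k * (k - 1) := by
  rw [betaSet, sum_image (by simpa using (strictAntiOn_beta hμ).injOn), sum_add_distrib,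
    mul_add, ← sum_range_id_mul_two, mul_comm _ 2, sum_range_reflect (fun i => i) k]

end betaSet

/-- The partition made of an `a`-column, `b`-row rectangle with the rows `μ 0, …, μ (b - 1)`
attached on its right and the columns `ν 0, …, ν (a - 1)` attached below it. -/
def glueRect (a b : ℕ) (μ ν : ℕ → ℕ) (i : ℕ) : ℕ :=
  if i < b then μ i + a else #{j ∈ range a | i - b < ν j}

section glueRect

variable {a b : ℕ} {μ ν : ℕ → ℕ} {i j : ℕ}

lemma glueRect_of_lt (hi : i < b) : glueRect a b μ ν i = μ i + a := if_pos hi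

lemma glueRect_le_of_le (hi : b ≤ i) : glueRect a b μ ν i ≤ a := by
  rw [glueRect, if_neg (not_lt.mpr hi)]
  exact (card_filter_le _ _).trans (card_range a).le

lemma lt_glueRect_iff (hν : Antitone ν) (hj : j < a) :
    j < glueRect a b μ ν i ↔ i < b + ν j := by
  by_cases hi : i < b
  · rw [glueRect_of_lt hi]
    omega
  · have hlower : IsLowerSet (↑{j ∈ range a | i - b < ν j} : Set ℕ) := fun x y hyx hx => by
      simp only [coe_filter, mem_range, Set.mem_ofPred_eq] at hx ⊢
      exact ⟨by omega, hx.2.trans_le (hν hyx)⟩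
    rw [glueRect, if_neg hi, ← mem_iff_lt_card_of_isLowerSet hlower, mem_filter, mem_range]
    omega

lemma lt_glueRect_iff_of_le (hj : a ≤ j) :
    j < glueRect a b μ ν i ↔ i < b ∧ j - a < μ i := by
  by_cases hi : i < b
  · rw [glueRect_of_lt hi]
    omega
  · have := glueRect_le_of_le (a := a) (μ := μ) (ν := ν) (not_lt.mp hi)
    omega

lemma glueRect_antitone (hμ : Antitone μ) (hν : Antitone ν) :
    Antitone (glueRect a b μ ν) := by
  intro i i' hii'
  refine le_of_forall_lt fun j hj => ?_
  rcases lt_or_ge j a with hja | hja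
  · rw [lt_glueRect_iff hν hja] at hj ⊢
    omega
  · rw [lt_glueRect_iff_of_le hja] at hj ⊢
    exact ⟨by omega, hj.2.trans_le (hμ hii')⟩

lemma glueRect_isPartition (hμ : Antitone μ) (hν : Antitone ν) :
    IsPartition (glueRect a b μ ν) := by
  refine ⟨glueRect_antitone hμ hν, b + ν 0, Nat.eq_zero_of_not_pos fun hpos => ?_⟩
  have ha : 0 < a := hpos.trans_le (glueRect_le_of_le (Nat.le_add_right b _))
  have := (lt_glueRect_iff hν ha).mp hpos
  omega

lemma conj_glueRect (hν : Antitone ν) : conj (glueRect a b μ ν) = glueRect b a ν μ := by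
  funext j
  rcases lt_or_ge j a with hj | hj
  · have hcol : {i | j < glueRect a b μ ν i} = Set.Iio (b + ν j) :=
      Set.ext fun i => lt_glueRect_iff hν hj
    rw [conj, hcol, Set.ncard_Iio_nat, glueRect_of_lt hj, add_comm]
  · have hcol : {i | j < glueRect a b μ ν i} = ↑{i ∈ range b | j - a < μ i} := by
      ext i
      simp [lt_glueRect_iff_of_le hj]
    rw [conj, hcol, Set.ncard_coe_finset, glueRect, if_neg (not_lt.mpr hj)]

lemma glueRect_congr {μ' ν' : ℕ → ℕ} (hμ : ∀ i < b, μ i = μ' i)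
    (hν : ∀ j < a, ν j = ν' j) :
    glueRect a b μ ν = glueRect a b μ' ν' := by
  funext i
  unfold glueRect
  split_ifs with hi
  · rw [hμ i hi]
  · exact congrArg card (filter_congr fun j hj => by rw [hν j (mem_range.mp hj)])

end glueRect

/-- The height of the `c`-Durfee rectangle; for `c = 0` it is the Durfee square. -/
noncomputable def durfeeRows (c : ℤ) (l : ℕ → ℕ) : ℕ :=
  Set.ncard {i : ℕ | (i : ℤ) + c < l i}

noncomputable def durfeeCols (c : ℤ) (l : ℕ → ℕ) : ℕ := (durfeeRows c l + c).toNat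

section durfeeRect

variable {c : ℤ} {a b : ℕ} {μ ν : ℕ → ℕ}

lemma durfeeRows_glueRect (hc : (a : ℤ) - b = c) : durfeeRows c (glueRect a b μ ν) = b := by
  have hrows : {i : ℕ | (i : ℤ) + c < glueRect a b μ ν i} = Set.Iio b := by
    ext i
    simp only [Set.mem_ofPred_eq, Set.mem_Iio]
    by_cases hi : i < b
    · rw [glueRect_of_lt hi]
      push_cast
      omega
    · have := glueRect_le_of_le (a := a) (μ := μ) (ν := ν) (not_lt.mp hi)
      omega
  rw [durfeeRows, hrows, Set.ncard_Iio_nat]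

lemma durfeeCols_glueRect (hc : (a : ℤ) - b = c) : durfeeCols c (glueRect a b μ ν) = a := by
  rw [durfeeCols, durfeeRows_glueRect hc]
  omega

end durfeeRect

namespace IsPartition

variable {l : ℕ → ℕ} (hl : IsPartition l) {c : ℤ} {i j : ℕ}
include hl

lemma lt_durfeeRows_iff : i < durfeeRows c l ↔ (i : ℤ) + c < l i := by
  obtain ⟨N, hN⟩ := hl.2
  have hfin : {i : ℕ | (i : ℤ) + c < l i}.Finite := by
    refine (Set.finite_Iio (N + c.natAbs)).subset fun i (hi : (i : ℤ) + c < l i) => ?_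
    by_contra h
    rw [Set.mem_Iio, not_lt] at h
    have := hl.1 (show N ≤ i by omega)
    omega
  have hlower : IsLowerSet {i : ℕ | (i : ℤ) + c < l i} := fun x y (hyx : y ≤ x) hx => by
    have := hl.1 hyx
    simp only [Set.mem_ofPred_eq] at hx ⊢
    omega
  rw [durfeeRows, ← Set.mem_Iio, ← hlower.eq_Iio_ncard hfin]
  rfl

lemma durfeeCols_eq : (durfeeCols c l : ℤ) = durfeeRows c l + c := by
  refine Int.toNat_of_nonneg (not_lt.mp fun hneg => ?_)
  have := (hl.lt_durfeeRows_iff (i := durfeeRows c l) (c := c)).mpr (by omega)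
  omega

lemma durfeeCols_le (hi : i < durfeeRows c l) : durfeeCols c l ≤ l i := by
  have hlast := (hl.lt_durfeeRows_iff (c := c)).mp (Nat.sub_one_lt_of_lt hi)
  have := hl.1 (Nat.le_sub_one_of_lt hi)
  have := hl.durfeeCols_eq (c := c)
  omega

lemma le_durfeeCols (hi : durfeeRows c l ≤ i) : l i ≤ durfeeCols c l := by
  have hnext := (hl.lt_durfeeRows_iff (c := c) (i := durfeeRows c l)).not.mp (lt_irrefl _)
  have := hl.1 hi
  have := hl.durfeeCols_eq (c := c)
  omega

lemma glueRect_durfee :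
    glueRect (durfeeCols c l) (durfeeRows c l) (fun i => l i - durfeeCols c l)
      (fun j => conj l j - durfeeRows c l) = l := by
  funext i
  refine eq_of_forall_lt_iff fun j => ?_
  rcases lt_or_ge j (durfeeCols c l) with hj | hj
  · rw [lt_glueRect_iff (hl.conj_antitone.tsub_const _) hj, ← hl.lt_conj_iff]
    have := hl.le_conj_of_forall_le (fun _ => hl.durfeeCols_le) hj
    omega
  · rw [lt_glueRect_iff_of_le hj]
    by_cases hi : i < durfeeRows c l
    · have := hl.durfeeCols_le hi
      omega
    · have := hl.le_durfeeCols (not_lt.mp hi)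
      omega

end IsPartition

noncomputable def betaPair (c : ℤ) (l : ℕ → ℕ) : Finset ℕ × Finset ℕ :=
  (betaSet (durfeeCols c l) fun j => conj l j - durfeeRows c l,
    betaSet (durfeeRows c l) fun i => l i - durfeeCols c l)

noncomputable def ofBetaPair (p : Finset ℕ × Finset ℕ) : ℕ → ℕ :=
  glueRect p.1.card p.2.card (partOfBeta p.2) (partOfBeta p.1)

lemma ofBetaPair_isPartition (p : Finset ℕ × Finset ℕ) : IsPartition (ofBetaPair p) :=
  glueRect_isPartition partOfBeta_antitone partOfBeta_antitone

lemma betaPair_ofBetaPair {c : ℤ} {p : Finset ℕ × Finset ℕ}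
    (hc : (p.1.card : ℤ) - p.2.card = c) :
    betaPair c (ofBetaPair p) = p := by
  rw [betaPair, ofBetaPair, durfeeRows_glueRect hc, durfeeCols_glueRect hc,
    conj_glueRect partOfBeta_antitone]
  refine Prod.ext ?_ ?_
  · refine (betaSet_congr fun j hj => ?_).trans betaSet_partOfBeta
    rw [glueRect_of_lt hj, Nat.add_sub_cancel]
  · refine (betaSet_congr fun i hi => ?_).trans betaSet_partOfBeta
    rw [glueRect_of_lt hi, Nat.add_sub_cancel]

namespace IsPartition

variable {l : ℕ → ℕ} (hl : IsPartition l) {c : ℤ}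
include hl

lemma card_betaPair_fst : (betaPair c l).1.card = durfeeCols c l :=
  card_betaSet (hl.conj_antitone.tsub_const _)

lemma card_betaPair_snd : (betaPair c l).2.card = durfeeRows c l :=
  card_betaSet (hl.1.tsub_const _)

lemma ofBetaPair_betaPair : ofBetaPair (betaPair c l) = l := by
  rw [ofBetaPair, hl.card_betaPair_fst, hl.card_betaPair_snd]
  conv_rhs => rw [← hl.glueRect_durfee (c := c)]
  exact glueRect_congr (fun _ => partOfBeta_betaSet (hl.1.tsub_const _))
    fun _ => partOfBeta_betaSet (hl.conj_antitone.tsub_const _)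

lemma sum_betaPair :
    (2 * (∑ x ∈ (betaPair c l).1, x + ∑ x ∈ (betaPair c l).2, x) + (betaPair c l).1.card +
      (betaPair c l).2.card : ℤ) = 2 * psize l + c ^ 2 := by
  have hab : (durfeeCols c l : ℤ) = durfeeRows c l + c := hl.durfeeCols_eq
  rw [hl.card_betaPair_fst, hl.card_betaPair_snd]
  set a := durfeeCols c l
  set b := durfeeRows c l
  have hE := two_mul_sum_betaSet (k := a) (hl.conj_antitone.tsub_const b)
  have hO := two_mul_sum_betaSet (k := b) (hl.1.tsub_const a)
  have hsize := hl.psize_eq_of_rect (a := a) (b := b) (fun _ => hl.durfeeCols_le)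
    fun _ => hl.le_durfeeCols
  have hsq (k : ℕ) : k * (k - 1) + k = k * k := by cases k <;> simp [Nat.mul_succ]
  have key : 2 * (∑ x ∈ (betaPair c l).1, x + ∑ x ∈ (betaPair c l).2, x) + a + b +
      2 * (a * b) = 2 * psize l + a * a + b * b := by
    have := hsq a
    have := hsq b
    simp only [betaPair]
    linarith
  have key' := congrArg (Nat.cast : ℕ → ℤ) key
  push_cast at key' ⊢
  linear_combination key' + (a - b + c) * hab

end IsPartition

noncomputable def betaPairEquiv (c : ℤ) :
    {l // IsPartition l} ≃ {p : Finset ℕ × Finset ℕ // (p.1.card : ℤ) - p.2.card = c} where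
  toFun l := ⟨betaPair c l.1, by
    rw [l.2.card_betaPair_fst, l.2.card_betaPair_snd, l.2.durfeeCols_eq]
    ring⟩
  invFun p := ⟨ofBetaPair p.1, ofBetaPair_isPartition p.1⟩
  left_inv l := Subtype.ext l.2.ofBetaPair_betaPair
  right_inv p := Subtype.ext (betaPair_ofBetaPair p.2)

/-- `S ↦ ({x | 2x ∈ S}, {x | 2x + 1 ∈ S})`. -/
def evenOddEquiv : Finset ℕ ≃ Finset ℕ × Finset ℕ :=
  Equiv.natSumNatEquivNat.finsetCongr.symm.trans sumEquiv.toEquiv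

section evenOddEquiv

variable (p : Finset ℕ × Finset ℕ)

lemma evenOddEquiv_symm_apply :
    evenOddEquiv.symm p = (p.1.disjSum p.2).map Equiv.natSumNatEquivNat.toEmbedding :=
  rfl

lemma sum_evenOddEquiv_symm :
    ∑ x ∈ evenOddEquiv.symm p, x = 2 * (∑ x ∈ p.1, x + ∑ x ∈ p.2, x) + p.2.card := by
  rw [evenOddEquiv_symm_apply, sum_map, sum_disjSum]
  simp only [Equiv.coe_toEmbedding, Equiv.natSumNatEquivNat_apply, Sum.elim_inl, Sum.elim_inr,
    sum_add_distrib, sum_const, smul_eq_mul, mul_one]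
  rw [mul_add, mul_sum, mul_sum]
  ring

lemma card_filter_evenOddEquiv_symm (q : ℕ → Prop) [DecidablePred q] :
    #{x ∈ evenOddEquiv.symm p | q x} =
      #{x ∈ p.1 | q (2 * x)} + #{x ∈ p.2 | q (2 * x + 1)} := by
  rw [evenOddEquiv_symm_apply, filter_map, card_map, card_filter, sum_disjSum, card_filter,
    card_filter]
  simp [Equiv.natSumNatEquivNat_apply]

lemma card_evenOddEquiv_symm : (evenOddEquiv.symm p).card = p.1.card + p.2.card := by
  simpa using card_filter_evenOddEquiv_symm p fun _ => True

lemma card_filter_even_evenOddEquiv_symm : #{x ∈ evenOddEquiv.symm p | x % 2 = 0} = p.1.card := by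
  simp [card_filter_evenOddEquiv_symm, Nat.add_mod]

lemma card_filter_odd_evenOddEquiv_symm : #{x ∈ evenOddEquiv.symm p | x % 2 = 1} = p.2.card := by
  simp [card_filter_evenOddEquiv_symm, Nat.add_mod]

end evenOddEquiv

noncomputable def partitionEquiv (c : ℤ) : {l // IsPartition l} ≃
    {S : Finset ℕ // (#{x ∈ S | x % 2 = 0} : ℤ) - #{x ∈ S | x % 2 = 1} = c} :=
  (betaPairEquiv c).trans <| evenOddEquiv.symm.subtypeEquiv fun p => by
    rw [card_filter_even_evenOddEquiv_symm, card_filter_odd_evenOddEquiv_symm]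

lemma sum_partitionEquiv (c : ℤ) (l : {l // IsPartition l}) :
    (2 * ∑ x ∈ (partitionEquiv c l).1, x + (partitionEquiv c l).1.card : ℤ) =
      4 * psize l + 2 * c ^ 2 - c := by
  have hsum := l.2.sum_betaPair (c := c)
  have hc := ((betaPairEquiv c) l).2
  change (2 * ∑ x ∈ evenOddEquiv.symm (betaPair c l), x +
    (evenOddEquiv.symm (betaPair c l)).card : ℤ) = _
  change ((betaPair c l).1.card : ℤ) - (betaPair c l).2.card = c at hc
  rw [sum_evenOddEquiv_symm, card_evenOddEquiv_symm]
  push_cast at hsum ⊢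
  linear_combination 2 * hsum - hc

lemma durfeeCols_zero (l : ℕ → ℕ) : durfeeCols 0 l = durfeeRows 0 l := by
  simp [durfeeCols]

lemma betaPair_fst_eq_snd_of_selfConj {l : ℕ → ℕ} (hsc : SelfConj l) :
    (betaPair 0 l).1 = (betaPair 0 l).2 := by
  have hconj : conj l = l := hsc
  simp only [betaPair, durfeeCols_zero, hconj]

namespace IsPartition

variable {l : ℕ → ℕ} (hl : IsPartition l) (hsc : SelfConj l)
include hl hsc

lemma Dset_eq_image : Dset l = (fun x => 2 * x + 1) '' (betaPair 0 l).2 := by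
  have hdiag (i : ℕ) : i < l i ↔ i < durfeeRows 0 l := by
    rw [hl.lt_durfeeRows_iff]
    omega
  have hconj : conj l = l := hsc
  ext x
  simp only [Dset, betaPair, betaSet, durfeeCols_zero, coe_image, coe_range, Set.mem_image,
    Set.mem_Iio, Set.mem_ofPred_eq, hookLen, hconj]
  constructor
  · rintro ⟨i, hi, rfl⟩
    rw [hdiag] at hi
    have := durfeeCols_zero l ▸ hl.durfeeCols_le hi
    refine ⟨_, ⟨i, hi, rfl⟩, ?_⟩
    omega
  · rintro ⟨_, ⟨i, hi, rfl⟩, rfl⟩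
    have := durfeeCols_zero l ▸ hl.durfeeCols_le hi
    refine ⟨i, (hdiag i).mpr hi, ?_⟩
    omega

lemma ncard_setOf_mem_Dset_mod_four (r : ℕ) :
    {x ∈ Dset l | x % 4 = 2 * r + 1}.ncard = #{x ∈ (betaPair 0 l).2 | x % 2 = r} := by
  have himage : {x ∈ Dset l | x % 4 = 2 * r + 1} =
      (fun x => 2 * x + 1) '' ↑{x ∈ (betaPair 0 l).2 | x % 2 = r} := by
    ext x
    simp only [hl.Dset_eq_image hsc, Set.mem_ofPred_eq, Set.mem_image, coe_filter, mem_coe]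
    constructor
    · rintro ⟨⟨s, hs, rfl⟩, hr⟩
      exact ⟨s, ⟨hs, by omega⟩, rfl⟩
    · rintro ⟨s, ⟨hs, hr⟩, rfl⟩
      exact ⟨⟨s, hs, rfl⟩, by omega⟩
  rw [himage, Set.ncard_image_of_injective _ fun x y h => by simpa using h, Set.ncard_coe_finset]

end IsPartition

/-- The set attached to `l` consists of the arm lengths `l i - i - 1` of its diagonal hooks. -/
noncomputable def selfConjEquiv : {l // IsPartition l ∧ SelfConj l} ≃ Finset ℕ where
  toFun l := (betaPair 0 l.1).2
  invFun S := ⟨ofBetaPair (S, S), ofBetaPair_isPartition _, conj_glueRect partOfBeta_antitone⟩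
  left_inv := by
    rintro ⟨l, hl, hsc⟩
    refine Subtype.ext ?_
    have hpair : ((betaPair 0 l).2, (betaPair 0 l).2) = betaPair 0 l :=
      Prod.ext (betaPair_fst_eq_snd_of_selfConj hsc).symm rfl
    exact (congrArg ofBetaPair hpair).trans hl.ofBetaPair_betaPair
  right_inv S := congrArg Prod.snd (betaPair_ofBetaPair (sub_self _))

lemma psize_eq_sum_selfConjEquiv (l : {l // IsPartition l ∧ SelfConj l}) :
    psize l = 2 * ∑ x ∈ selfConjEquiv l, x + (selfConjEquiv l).card := by
  have hsum := l.2.1.sum_betaPair (c := 0)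
  rw [betaPair_fst_eq_snd_of_selfConj l.2.2] at hsum
  change psize l = 2 * ∑ x ∈ (betaPair 0 l).2, x + (betaPair 0 l).2.card
  omega

lemma ncard_D1_eq (l : {l // IsPartition l ∧ SelfConj l}) :
    (D1 l).ncard = #{x ∈ selfConjEquiv l | x % 2 = 0} :=
  l.2.1.ncard_setOf_mem_Dset_mod_four l.2.2 0

lemma ncard_D3_eq (l : {l // IsPartition l ∧ SelfConj l}) :
    (D3 l).ncard = #{x ∈ selfConjEquiv l | x % 2 = 1} :=
  l.2.1.ncard_setOf_mem_Dset_mod_four l.2.2 1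

lemma triangle_eq_two_mul_sq_sub (m : ℕ) :
    ((m * (m + 1) / 2 : ℕ) : ℤ) = 2 * ((-1) ^ (m + 1) * (((m + 1) / 2 : ℕ) : ℤ)) ^ 2 -
      (-1) ^ (m + 1) * (((m + 1) / 2 : ℕ) : ℤ) := by
  obtain ⟨k, rfl | rfl⟩ := Nat.even_or_odd' m
  · have htri : 2 * k * (2 * k + 1) / 2 = k * (2 * k + 1) := by
      rw [mul_assoc, Nat.mul_div_cancel_left _ two_pos]
    rw [Odd.neg_one_pow ⟨k, rfl⟩, htri, show (2 * k + 1) / 2 = k by omega]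
    push_cast
    ring
  · have htri : (2 * k + 1) * (2 * k + 1 + 1) / 2 = (2 * k + 1) * (k + 1) := by
      rw [show 2 * k + 1 + 1 = 2 * (k + 1) by ring, Nat.mul_left_comm,
        Nat.mul_div_cancel_left _ two_pos]
    rw [Even.neg_one_pow ⟨k + 1, by ring⟩, htri, show (2 * k + 1 + 1) / 2 = k + 1 by omega]
    push_cast
    ring

theorem bijection_SCm_partitions (m n : ℕ) :
    Nonempty
      ({l : ℕ → ℕ // IsPartition l ∧ SelfConj l ∧ psize l = 4 * n + m * (m + 1) / 2 ∧
          (Set.ncard (D1 l) : ℤ) - (Set.ncard (D3 l) : ℤ) =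
            (-1 : ℤ) ^ (m + 1) * (((m + 1) / 2 : ℕ) : ℤ)} ≃
        {l : ℕ → ℕ // IsPartition l ∧ psize l = n}) := by
  set c : ℤ := (-1 : ℤ) ^ (m + 1) * (((m + 1) / 2 : ℕ) : ℤ)
  have hc : ((m * (m + 1) / 2 : ℕ) : ℤ) = 2 * c ^ 2 - c := triangle_eq_two_mul_sq_sub m
  let P (S : Finset ℕ) : Prop := (#{x ∈ S | x % 2 = 0} : ℤ) - #{x ∈ S | x % 2 = 1} = c
  let Q (S : Finset ℕ) : Prop := 2 * ∑ x ∈ S, x + S.card = 4 * n + m * (m + 1) / 2 ∧ P S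
  refine ⟨(Equiv.subtypeSubtypeEquivSubtype fun h => ⟨h.1, h.2.1⟩).symm.trans <|
    (selfConjEquiv.subtypeEquiv (q := Q) fun l => ?_).trans <|
    (Equiv.subtypeSubtypeEquivSubtype (p := P) And.right).symm.trans <|
    ((partitionEquiv c).symm.subtypeEquiv fun S => ?_).trans <|
    Equiv.subtypeSubtypeEquivSubtype And.left⟩
  · simp only [psize_eq_sum_selfConjEquiv, ncard_D1_eq, ncard_D3_eq, l.2.1, l.2.2, true_and]
    rfl
  · have hsize := sum_partitionEquiv c ((partitionEquiv c).symm S)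
    rw [Equiv.apply_symm_apply] at hsize
    simp only [((partitionEquiv c).symm S).2, true_and]
    omega
end

section
/- Let λ be a self-conjugate partition and μ its corresponding partition under the bijection φ^(m). Then for every positive integer k, the number of boxes (i,j) in λ with h_λ(i,j) = 2k equals twice the number of boxes (i',j') in μ with h_μ(i',j') = k. In particular, λ is a 2t-core if and only if μ is a t-core. -/
/-- `(a,b)` (restricted to indices `< r`, `< s`) is the diagonal sequence pair of the
self-conjugate partition `l`: `D1 l = {4 a i + 1}` with `a` strictly decreasing, and
`D3 l = {4 b j - 1}` with `b` strictly decreasing and positive. -/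
def DiagPair (l : ℕ → ℕ) (r s : ℕ) (a b : ℕ → ℕ) : Prop :=
  StrictAntiOn a (Set.Iio r) ∧ StrictAntiOn b (Set.Iio s) ∧
  (∀ j, j < s → 1 ≤ b j) ∧
  D1 l = {x | ∃ i, i < r ∧ x = 4 * a i + 1} ∧
  D3 l = {x | ∃ j, j < s ∧ x = 4 * b j - 1}

/-- `μ` is the image of the diagonal sequence pair `((a),(b))` under the map `φ`:
the first `r` parts are `a i + (i+1) + s - r` (1-indexed `a_i + i + s - r`), and the
remaining parts form the conjugate of `γ = (b 0 - s, b 1 - s + 1, …, b (s-1) - 1)`. -/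
def PhiImage (r s : ℕ) (a b : ℕ → ℕ) (μ : ℕ → ℕ) : Prop :=
  (∀ i, i < r → (μ i : ℤ) = (a i : ℤ) + (i + 1) + s - r) ∧
  (∀ i, r ≤ i → μ i = Set.ncard {j | j < s ∧ i - r < b j + j - s})

/-- `μ` is the corresponding partition of the self-conjugate partition `l`
under the bijection `φ` of Cho–Huh–Sohn. -/
def Corresponds (l μ : ℕ → ℕ) : Prop :=
  ∃ r s a b, DiagPair l r s a b ∧ PhiImage r s a b μ

namespace CHSAux

lemma ncard_Iio_nat (n : ℕ) : (Set.Iio n).ncard = n := by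
  rw [Set.ncard_eq_toFinset_card']; simp

noncomputable def gI (l : ℕ → ℕ) (i : ℕ) : ℤ := (l i : ℤ) - (i + 1)

def Bset (l : ℕ → ℕ) : Set ℤ := {x | ∃ i, x = gI l i}

lemma gI_strictAnti {l : ℕ → ℕ} (hl : Antitone l) : StrictAnti (gI l) := by
  apply strictAnti_nat_of_succ_lt
  intro n
  have : l (n+1) ≤ l n := hl (by omega)
  simp only [gI]
  push_cast
  omega

lemma zero_of_ge {l : ℕ → ℕ} (hl : IsPartition l) {N : ℕ} (hN : l N = 0) :
    ∀ i, N ≤ i → l i = 0 := fun i hi => Nat.le_zero.mp (hN ▸ hl.1 hi)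

lemma lt_conj_iff {l : ℕ → ℕ} (hl : IsPartition l) (i j : ℕ) :
    i < conj l j ↔ j < l i := by
  obtain ⟨N, hN⟩ := hl.2
  have hz := zero_of_ge hl hN
  have hfin : {i | j < l i}.Finite := by
    apply (Set.finite_Iio N).subset
    intro i hi
    simp only [Set.mem_setOf_eq] at hi
    by_contra h
    rw [hz i (not_lt.mp h)] at hi
    omega
  constructor
  · intro h
    by_contra hc
    have hsub : {i' | j < l i'} ⊆ Set.Iio i := by
      intro i' hi'
      simp only [Set.mem_setOf_eq] at hi'
      by_contra h'
      exact hc (lt_of_lt_of_le hi' (hl.1 (not_lt.mp h')))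
    have := Set.ncard_le_ncard hsub (Set.finite_Iio i)
    rw [ncard_Iio_nat] at this
    exact absurd h (by unfold conj; omega)
  · intro h
    have hsub : Set.Iio (i+1) ⊆ {i' | j < l i'} := by
      intro i' hi'
      simp only [Set.mem_Iio] at hi'
      exact lt_of_lt_of_le h (hl.1 (Nat.lt_succ_iff.mp hi'))
    have := Set.ncard_le_ncard hsub hfin
    rw [ncard_Iio_nat] at this
    unfold conj; omega

lemma conj_anti {l : ℕ → ℕ} (hl : IsPartition l) : Antitone (conj l) := by
  intro j j' hjj'
  by_contra h
  push_neg at h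
  have h1 : j' < l (conj l j) := (lt_conj_iff hl _ _).mp h
  have h2 : j < l (conj l j) := lt_of_le_of_lt hjj' h1
  exact lt_irrefl _ ((lt_conj_iff hl _ _).mpr h2)

/-- The key complementation: `-1 - x ∈ B(conj l)` iff `x ∉ B(l)`. -/
lemma Bset_compl {l : ℕ → ℕ} (hl : IsPartition l) (x : ℤ) :
    -1 - x ∈ Bset (conj l) ↔ x ∉ Bset l := by
  constructor
  · rintro ⟨j, hj⟩ ⟨i, hi⟩
    simp only [gI] at hj hi
    -- l i + conj l j = i + j + 1 impossible
    by_cases hc : j < l i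
    · have h1 : i < conj l j := (lt_conj_iff hl i j).mpr hc
      omega
    · have h2 : ¬ i < conj l j := fun h => hc ((lt_conj_iff hl i j).mp h)
      omega
  · intro hx
    obtain ⟨N, hN⟩ := hl.2
    have hz := zero_of_ge hl hN
    -- least m with gI l m < x
    have hex : ∃ m, gI l m < x := by
      refine ⟨N + (1 - x).toNat, ?_⟩
      have h0 : l (N + (1 - x).toNat) = 0 := hz _ (by omega)
      have h1 : (1:ℤ) - x ≤ ((1 - x).toNat : ℤ) := Int.self_le_toNat _
      simp only [gI, h0]
      push_cast
      omega
    set m := Nat.find hex with hm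
    have hm1 : gI l m < x := Nat.find_spec hex
    have hm2 : ∀ i, i < m → x + 1 ≤ gI l i := by
      intro i hi
      have h1 : ¬ gI l i < x := Nat.find_min hex hi
      have h2 : x ≠ gI l i := fun h => hx ⟨i, h⟩
      omega
    have hxm : 0 ≤ x + m := by
      have : -(m+1 : ℤ) ≤ gI l m := by simp [gI]; omega
      omega
    refine ⟨(x + m).toNat, ?_⟩
    have hj0 : ((x + m).toNat : ℤ) = x + m := Int.toNat_of_nonneg hxm
    have hconj : conj l (x + m).toNat = m := by
      have hub : conj l (x + m).toNat ≤ m := by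
        by_contra h
        push_neg at h
        have h1 : ((x+m).toNat) < l m := by
          have h2 := (lt_conj_iff hl m (x+m).toNat).mpr
          by_contra h3
          push_neg at h3
          have : ¬ m < conj l (x+m).toNat := fun hc =>
            (by omega : ¬ ((x+m).toNat) < l m) ((lt_conj_iff hl m _).mp hc)
          omega
        simp only [gI] at hm1
        omega
      have hlb : m ≤ conj l (x + m).toNat := by
        rcases Nat.eq_zero_or_pos m with h0 | h0
        · omega
        · have h1 : x + 1 ≤ gI l (m-1) := hm2 (m-1) (by omega)
          simp only [gI] at h1
          have h2 : ((x+m).toNat) < l (m-1) := by omega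
          have := (lt_conj_iff hl (m-1) _).mpr h2
          omega
      omega
    simp only [gI, hconj, hj0]
    ring


lemma conj_ge_of_cell {l : ℕ → ℕ} (hl : IsPartition l) {i j : ℕ} (h : j < l i) :
    i + 1 ≤ conj l j := (lt_conj_iff hl i j).mpr h

lemma hook_int {l : ℕ → ℕ} (hl : IsPartition l) {i j : ℕ} (h : j < l i) :
    (hookLen l i j : ℤ) = gI l i - ((j : ℤ) - conj l j) := by
  have h1 : i + 1 ≤ conj l j := conj_ge_of_cell hl h
  simp only [hookLen, gI]
  push_cast [Nat.sub_add_cancel, h1, h]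
  omega

lemma gI_mem {l : ℕ → ℕ} (i : ℕ) : gI l i ∈ Bset l := ⟨i, rfl⟩

lemma hook_count {l : ℕ → ℕ} (hl : IsPartition l) {k : ℕ} (hk : 1 ≤ k) :
    Set.ncard {p : ℕ × ℕ | p.2 < l p.1 ∧ hookLen l p.1 p.2 = k} =
    Set.ncard {x : ℤ | x ∈ Bset l ∧ x - k ∉ Bset l} := by
  have himg : {x : ℤ | x ∈ Bset l ∧ x - k ∉ Bset l} =
      (fun p : ℕ × ℕ => gI l p.1) '' {p : ℕ × ℕ | p.2 < l p.1 ∧ hookLen l p.1 p.2 = k} := by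
    ext x
    simp only [Set.mem_setOf_eq, Set.mem_image, Prod.exists]
    constructor
    · rintro ⟨⟨i, hi⟩, hx2⟩
      subst hi
      obtain ⟨j, hj⟩ := ((Bset_compl hl (gI l i - k)).mpr hx2 : _)
      simp only [gI] at hj
      have hwk : gI l i - k = (j : ℤ) - conj l j := by simp only [gI]; omega
      have hjl : j < l i := by
        by_contra hc
        push_neg at hc
        have h2 : ¬ i < conj l j := fun hcc => (by omega : ¬ j < l i) ((lt_conj_iff hl i j).mp hcc)
        simp only [gI] at hwk
        omega
      refine ⟨i, j, ⟨hjl, ?_⟩, rfl⟩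
      have hki := hook_int hl hjl
      simp only [gI] at hki hwk ⊢
      omega
    · rintro ⟨i, j, ⟨hij, hh⟩, rfl⟩
      refine ⟨gI_mem i, ?_⟩
      have hki := hook_int hl hij
      rw [hh] at hki
      have h1 : gI l i - k = (j : ℤ) - conj l j := by omega
      rw [h1]
      exact (Bset_compl hl _).mp ⟨j, by simp only [gI]; ring⟩
  rw [himg, Set.ncard_image_of_injOn]
  rintro ⟨i, j⟩ ⟨hij, hh⟩ ⟨i', j'⟩ ⟨hij', hh'⟩ heq
  simp only [Set.mem_setOf_eq] at hij hh hij' hh'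
  simp only at heq
  have hii : i = i' := (gI_strictAnti hl.1).injective heq
  subst hii
  have h1 := hook_int hl hij
  have h2 := hook_int hl hij'
  rw [hh] at h1; rw [hh'] at h2
  have h3 : (j : ℤ) - conj l j = (j' : ℤ) - conj l j' := by omega
  have hmono : ∀ u v : ℕ, u < v → (u : ℤ) - conj l u < (v : ℤ) - conj l v := by
    intro u v huv
    have := conj_anti hl (le_of_lt huv)
    omega
  have : j = j' := by
    rcases lt_trichotomy j j' with h | h | h
    · exact absurd h3 (ne_of_lt (hmono _ _ h))
    · exact h
    · exact absurd h3.symm (ne_of_lt (hmono _ _ h))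
  simp [this]

lemma Bset_mem_le {l : ℕ → ℕ} (hl : Antitone l) {x : ℤ} (hx : x ∈ Bset l) :
    x ≤ (l 0 : ℤ) - 1 := by
  obtain ⟨i, rfl⟩ := hx
  have := hl (Nat.zero_le i)
  simp only [gI]
  push_cast
  omega

lemma Bset_mem_low {l : ℕ → ℕ} (hl : IsPartition l) {N : ℕ} (hN : l N = 0)
    {x : ℤ} (hx : x ≤ -(N+1 : ℤ)) : x ∈ Bset l := by
  refine ⟨(-x-1).toNat, ?_⟩
  have h0 : (N : ℤ) ≤ (-x-1) := by omega
  have h1 : ((-x-1).toNat : ℤ) = -x-1 := Int.toNat_of_nonneg (by omega)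
  have h2 : l ((-x-1).toNat) = 0 := zero_of_ge hl hN _ (by omega)
  simp only [gI, h2]
  omega

lemma count_finite {l : ℕ → ℕ} (hl : IsPartition l) (k : ℤ) :
    {x : ℤ | x ∈ Bset l ∧ x - k ∉ Bset l}.Finite := by
  obtain ⟨N, hN⟩ := hl.2
  apply (Set.finite_Icc (k - (N+1) + 1) ((l 0 : ℤ) - 1)).subset
  rintro x ⟨h1, h2⟩
  have ha := Bset_mem_le hl.1 h1
  have hb : ¬ (x - k ≤ -(N+1 : ℤ)) := fun h => h2 (Bset_mem_low hl hN h)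
  simp only [Set.mem_Icc]
  omega

lemma cells_finite {l : ℕ → ℕ} (hl : IsPartition l) (k : ℕ) :
    {p : ℕ × ℕ | p.2 < l p.1 ∧ hookLen l p.1 p.2 = k}.Finite := by
  obtain ⟨N, hN⟩ := hl.2
  apply ((Set.finite_Iio N).prod (Set.finite_Iio (l 0))).subset
  rintro ⟨i, j⟩ ⟨h1, _⟩
  constructor
  · simp only [Set.mem_Iio]
    by_contra h
    rw [zero_of_ge hl hN i (not_lt.mp h)] at h1
    omega
  · exact lt_of_lt_of_le h1 (hl.1 (Nat.zero_le i))

lemma stepdown {b : ℕ → ℕ} {s : ℕ} (hb : StrictAntiOn b (Set.Iio s)) :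
    ∀ j1 j2, j1 ≤ j2 → j2 < s → b j2 + (j2 - j1) ≤ b j1 := by
  intro j1 j2
  induction j2 with
  | zero => intro h _; interval_cases j1; simp
  | succ n ih =>
    intro h12 h2s
    rcases Nat.eq_or_lt_of_le h12 with rfl | h
    · simp
    · have hn : n < s := by omega
      have := ih (by omega) hn
      have hlt : b (n+1) < b n := hb (Set.mem_Iio.mpr hn) (Set.mem_Iio.mpr h2s) (by omega)
      omega

end CHSAux
open CHSAux in
theorem even_hooks_halved (l μ : ℕ → ℕ)
    (hl : IsPartition l) (hsc : SelfConj l) (hμ : IsPartition μ)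
    (hcorr : Corresponds l μ) :
    (∀ k : ℕ, 0 < k →
      Set.ncard {p : ℕ × ℕ | p.2 < l p.1 ∧ hookLen l p.1 p.2 = 2 * k} =
        2 * Set.ncard {p : ℕ × ℕ | p.2 < μ p.1 ∧ hookLen μ p.1 p.2 = k}) ∧
    (∀ t : ℕ, IsCore l (2 * t) ↔ IsCore μ t) := by
  obtain ⟨r, s, a, b, ⟨hsa, hsb, hb1, hD1, hD3⟩, hphi1, hphi2⟩ := hcorr
  have hscl : conj l = l := hsc
  have hsym : ∀ x : ℤ, x ∈ Bset l ↔ -1 - x ∉ Bset l := by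
    intro x
    have h := Bset_compl hl (-1-x)
    rw [hscl, show -1 - (-1-x) = x by ring] at h
    exact h
  have hdiag : ∀ i : ℕ, i < l i → hookLen l i i = 2 * (l i - (i+1)) + 1 := by
    intro i hi
    have hci : conj l i = l i := congrFun hscl i
    simp only [hookLen, hci]
    omega
  have hDset : ∀ n : ℕ, n ∈ Dset l → ∃ i', (n : ℤ) = 2 * gI l i' + 1 ∧ n % 2 = 1 := by
    rintro n ⟨i, hi, rfl⟩
    refine ⟨i, ?_, ?_⟩
    · rw [hdiag i hi]; simp only [gI]; omega
    · rw [hdiag i hi]; omega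
  have hBnn : ∀ x : ℤ, 0 ≤ x →
      (x ∈ Bset l ↔ ((∃ i < r, x = 2 * (a i : ℤ)) ∨ (∃ j < s, x = 2 * (b j : ℤ) - 1))) := by
    intro x hx
    constructor
    · rintro ⟨i, rfl⟩
      have hi : i < l i := by simp only [gI] at hx; omega
      have hd : hookLen l i i ∈ Dset l := ⟨i, hi, rfl⟩
      obtain ⟨i', hn, hodd⟩ := hDset _ hd
      have hgi : (hookLen l i i : ℤ) = 2 * gI l i + 1 := by
        rw [hdiag i hi]; simp only [gI]; omega
      rcases (by omega : hookLen l i i % 4 = 1 ∨ hookLen l i i % 4 = 3) with h4 | h4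
      · have : hookLen l i i ∈ D1 l := ⟨hd, h4⟩
        rw [hD1] at this
        obtain ⟨i'', hi'', he⟩ := this
        exact Or.inl ⟨i'', hi'', by omega⟩
      · have : hookLen l i i ∈ D3 l := ⟨hd, h4⟩
        rw [hD3] at this
        obtain ⟨j, hj, he⟩ := this
        have := hb1 j hj
        exact Or.inr ⟨j, hj, by omega⟩
    · rintro (⟨i, hi, he⟩ | ⟨j, hj, he⟩)
      · have hmem : 4 * a i + 1 ∈ D1 l := by rw [hD1]; exact ⟨i, hi, rfl⟩
        obtain ⟨i', hn, _⟩ := hDset _ hmem.1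
        refine ⟨i', ?_⟩
        push_cast at hn
        omega
      · have hmem : 4 * b j - 1 ∈ D3 l := by rw [hD3]; exact ⟨j, hj, rfl⟩
        obtain ⟨i', hn, _⟩ := hDset _ hmem.1
        have := hb1 j hj
        refine ⟨i', ?_⟩
        have hc : ((4 * b j - 1 : ℕ) : ℤ) = 4 * (b j : ℤ) - 1 := by omega
        omega
  set A : Set ℤ := {y | 2*y ∈ Bset l} with hAdef
  have hA : ∀ y : ℤ, y ∈ A ↔
      ((∃ i < r, y = (a i : ℤ)) ∨ (y < 0 ∧ ∀ j < s, (b j : ℤ) ≠ -y)) := by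
    intro y
    rcases le_or_gt 0 y with hy | hy
    · have h := hBnn (2*y) (by omega)
      constructor
      · intro hmem
        rcases h.mp hmem with ⟨i, hi, he⟩ | ⟨j, hj, he⟩
        · exact Or.inl ⟨i, hi, by omega⟩
        · exfalso; omega
      · rintro (⟨i, hi, he⟩ | ⟨hneg, _⟩)
        · exact h.mpr (Or.inl ⟨i, hi, by omega⟩)
        · omega
    · have h1 : (2*y ∈ Bset l) ↔ -1-2*y ∉ Bset l := hsym _
      have h2 := hBnn (-1-2*y) (by omega)
      constructor
      · intro hmem
        have h3 := h1.mp hmem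
        refine Or.inr ⟨hy, fun j hj hbj => ?_⟩
        exact h3 (h2.mpr (Or.inr ⟨j, hj, by omega⟩))
      · rintro (⟨i, hi, he⟩ | ⟨_, hall⟩)
        · exfalso; have : (0:ℤ) ≤ (a i : ℤ) := Int.natCast_nonneg _; omega
        · refine h1.mpr (fun hc => ?_)
          rcases h2.mp hc with ⟨i, hi, he⟩ | ⟨j, hj, he⟩
          · omega
          · exact hall j hj (by omega)
  have hC : ∀ y : ℤ, (2*y + 1 ∈ Bset l) ↔ -1 - y ∉ A := by
    intro y
    rw [hsym (2*y+1), show -1-(2*y+1) = 2*(-1-y) by ring]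
    exact Iff.rfl
  -- the partition γ
  set γ : ℕ → ℕ := fun m => if m < s then b m + m - s else 0 with hγdef
  have hbs : ∀ j, j < s → s ≤ b j + j := by
    intro j hj
    have h1 := stepdown hsb j (s-1) (by omega) (by omega)
    have h2 := hb1 (s-1) (by omega)
    omega
  have hγpart : IsPartition γ := by
    constructor
    · intro m m' hmm'
      by_cases h' : m' < s
      · have hm : m < s := lt_of_le_of_lt hmm' h'
        have := stepdown hsb m m' hmm' h'
        simp only [hγdef, if_pos h', if_pos hm]
        omega
      · simp only [hγdef, if_neg h']
        exact Nat.zero_le _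
    · exact ⟨s, by simp [hγdef]⟩
  have hγconj : ∀ i, r ≤ i → μ i = conj γ (i - r) := by
    intro i hi
    rw [hphi2 i hi]
    unfold conj
    congr 1
    ext j
    simp only [Set.mem_setOf_eq, hγdef]
    constructor
    · rintro ⟨hjs, hlt⟩; rw [if_pos hjs]; exact hlt
    · intro h
      by_cases hjs : j < s
      · rw [if_pos hjs] at h; exact ⟨hjs, h⟩
      · rw [if_neg hjs] at h; omega
  have hBγ : ∀ w : ℤ, w ∈ Bset γ ↔
      ((∃ j < s, w = (b j : ℤ) - ((s:ℤ)+1)) ∨ w ≤ -(s:ℤ)-1) := by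
    intro w
    constructor
    · rintro ⟨m, rfl⟩
      by_cases hm : m < s
      · exact Or.inl ⟨m, hm, by
          simp only [gI, hγdef, if_pos hm]
          have := hbs m hm
          omega⟩
      · refine Or.inr ?_
        simp only [gI, hγdef, if_neg hm]
        omega
    · rintro (⟨j, hj, rfl⟩ | hw)
      · refine ⟨j, ?_⟩
        simp only [gI, hγdef, if_pos hj]
        have := hbs j hj
        omega
      · refine ⟨(-w-1).toNat, ?_⟩
        have h1 : ((-w-1).toNat : ℤ) = -w-1 := Int.toNat_of_nonneg (by omega)
        have h2 : ¬ ((-w-1).toNat < s) := by omega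
        simp only [gI, hγdef, if_neg h2]
        omega
  have hBμ : ∀ z : ℤ, z ∈ Bset μ ↔ (z - ((s:ℤ) - r)) ∈ A := by
    intro z
    rw [hA (z - ((s:ℤ)-r))]
    constructor
    · rintro ⟨i, rfl⟩
      by_cases hi : i < r
      · refine Or.inl ⟨i, hi, ?_⟩
        have := hphi1 i hi
        simp only [gI]
        omega
      · push_neg at hi
        have hm := hγconj i hi
        have hmem : gI μ i + r ∈ Bset (conj γ) := by
          refine ⟨i - r, ?_⟩
          simp only [gI, hm]
          have hc : ((i - r : ℕ) : ℤ) = (i:ℤ) - r := by omega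
          omega
        have hnot : -1 - (gI μ i + r) ∉ Bset γ := by
          have h := Bset_compl hγpart (-1 - (gI μ i + r))
          rw [show -1 - (-1 - (gI μ i + r)) = gI μ i + r by ring] at h
          exact h.mp hmem
        rw [hBγ] at hnot
        push_neg at hnot
        obtain ⟨hn1, hn2⟩ := hnot
        refine Or.inr ⟨by omega, fun j hj hbj => ?_⟩
        exact (hn1 j hj) (by omega)
    · rintro (⟨i, hi, he⟩ | ⟨hneg, hall⟩)
      · refine ⟨i, ?_⟩
        have := hphi1 i hi
        simp only [gI]
        omega
      · have hx : (-1 - (z + r)) ∉ Bset γ := by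
          rw [hBγ]
          push_neg
          refine ⟨fun j hj hbj => ?_, by omega⟩
          exact (hall j hj) (by omega)
        have hmem : z + r ∈ Bset (conj γ) := by
          have h := (Bset_compl hγpart (-1-(z+r)))
          rw [show -1 - (-1-(z+r)) = z + r by ring] at h
          exact h.mpr hx
        obtain ⟨m, hm⟩ := hmem
        refine ⟨r + m, ?_⟩
        have hμm := hγconj (r+m) (by omega)
        rw [show r + m - r = m from Nat.add_sub_cancel_left r m] at hμm
        simp only [gI] at hm ⊢
        rw [hμm]
        push_cast
        omega
  have key : ∀ k : ℕ, 0 < k →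
      Set.ncard {p : ℕ × ℕ | p.2 < l p.1 ∧ hookLen l p.1 p.2 = 2 * k} =
        2 * Set.ncard {p : ℕ × ℕ | p.2 < μ p.1 ∧ hookLen μ p.1 p.2 = k} := by
    intro k hk
    rw [hook_count hl (show 1 ≤ 2*k by omega), hook_count hμ hk]
    set kz : ℤ := (k : ℤ) with hkz
    have hcast : ((2*k : ℕ) : ℤ) = 2 * kz := by push_cast; ring
    set SA : Set ℤ := {y | y ∈ A ∧ y - kz ∉ A} with hSAdef
    set SC : Set ℤ := {y | (2*y+1 ∈ Bset l) ∧ ¬(2*(y-kz)+1 ∈ Bset l)} with hSCdef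
    have hSBfin : {x : ℤ | x ∈ Bset l ∧ x - ((2*k : ℕ) : ℤ) ∉ Bset l}.Finite :=
      count_finite hl _
    have hsub1 : (fun y => 2*y) '' SA ⊆ {x : ℤ | x ∈ Bset l ∧ x - ((2*k : ℕ) : ℤ) ∉ Bset l} := by
      rintro x ⟨y, ⟨h1, h2⟩, rfl⟩
      refine ⟨h1, fun hc => h2 ?_⟩
      show 2*(y - kz) ∈ Bset l
      rw [show 2*(y-kz) = 2*y - ((2*k:ℕ):ℤ) by omega]
      exact hc
    have hinj2 : ∀ (S : Set ℤ), Set.InjOn (fun y : ℤ => 2*y) S := by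
      intro S x _ y _ h
      simp only at h
      omega
    have hSAfin : SA.Finite :=
      Set.Finite.of_finite_image (hSBfin.subset hsub1) (hinj2 SA)
    have hSCeq : SC = (fun w => kz - 1 - w) '' SA := by
      ext y
      simp only [hSCdef, Set.mem_setOf_eq, Set.mem_image]
      constructor
      · rintro ⟨h1, h2⟩
        refine ⟨kz - 1 - y, ⟨?_, ?_⟩, by ring⟩
        · by_contra hna
          exact h2 ((hC (y-kz)).mpr (by rw [show -1-(y-kz) = kz-1-y by ring]; exact hna))
        · intro hc
          exact (hC y).mp h1 (by rw [show -1-y = kz-1-y-kz by ring]; exact hc)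
      · rintro ⟨w, ⟨hw1, hw2⟩, rfl⟩
        constructor
        · exact (hC (kz-1-w)).mpr (by rw [show -1-(kz-1-w) = w - kz by ring]; exact hw2)
        · intro hc
          exact (hC (kz-1-w-kz)).mp hc (by rw [show -1-(kz-1-w-kz) = w by ring]; exact hw1)
    have hSCfin : SC.Finite := by
      rw [hSCeq]
      exact hSAfin.image _
    have hinjC : Set.InjOn (fun w : ℤ => kz - 1 - w) SA := by
      intro x _ y _ h
      simp only at h
      omega
    have hsub2 : (fun y => 2*y+1) '' SC ⊆
        {x : ℤ | x ∈ Bset l ∧ x - ((2*k : ℕ) : ℤ) ∉ Bset l} := by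
      rintro x ⟨y, ⟨h1, h2⟩, rfl⟩
      refine ⟨h1, fun hc => h2 ?_⟩
      rw [show 2*(y-kz)+1 = 2*y+1 - ((2*k:ℕ):ℤ) by omega]
      exact hc
    have hsplit : {x : ℤ | x ∈ Bset l ∧ x - ((2*k : ℕ) : ℤ) ∉ Bset l} =
        (fun y => 2*y) '' SA ∪ (fun y => 2*y+1) '' SC := by
      apply Set.Subset.antisymm
      · rintro x ⟨h1, h2⟩
        obtain ⟨y, hy⟩ : ∃ y : ℤ, x = 2*y ∨ x = 2*y+1 := ⟨x/2, by omega⟩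
        rcases hy with rfl | rfl
        · left
          refine ⟨y, ⟨h1, fun hc => h2 ?_⟩, rfl⟩
          rw [show (2*y : ℤ) - ((2*k:ℕ):ℤ) = 2*(y - kz) by omega]
          exact hc
        · right
          refine ⟨y, ⟨h1, fun hc => h2 ?_⟩, rfl⟩
          rw [show (2*y+1 : ℤ) - ((2*k:ℕ):ℤ) = 2*(y - kz)+1 by omega]
          exact hc
      · exact Set.union_subset hsub1 hsub2
    have hdisj : Disjoint ((fun y : ℤ => 2*y) '' SA) ((fun y : ℤ => 2*y+1) '' SC) := by
      rw [Set.disjoint_left]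
      rintro x ⟨y, _, rfl⟩ ⟨y', _, he⟩
      simp only at he
      omega
    have hμside : {x : ℤ | x ∈ Bset μ ∧ x - (k : ℤ) ∉ Bset μ} =
        (fun y => y + ((s:ℤ) - r)) '' SA := by
      ext z
      simp only [Set.mem_setOf_eq, Set.mem_image]
      constructor
      · rintro ⟨h1, h2⟩
        refine ⟨z - ((s:ℤ) - r), ⟨(hBμ z).mp h1, fun hc => h2 ?_⟩, by ring⟩
        refine (hBμ (z - kz)).mpr ?_
        rw [show z - kz - ((s:ℤ) - r) = z - ((s:ℤ)-r) - kz by ring]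
        exact hc
      · rintro ⟨w, ⟨hw1, hw2⟩, rfl⟩
        constructor
        · exact (hBμ _).mpr (by rw [show w + ((s:ℤ)-r) - ((s:ℤ)-r) = w by ring]; exact hw1)
        · intro hc
          apply hw2
          have := (hBμ _).mp hc
          rw [show w + ((s:ℤ)-r) - kz - ((s:ℤ)-r) = w - kz by ring] at this
          exact this
    rw [hsplit, Set.ncard_union_eq hdisj (hSAfin.image _) (hSCfin.image _),
      Set.ncard_image_of_injOn (hinj2 SA),
      Set.ncard_image_of_injOn (by intro x _ y _ h; simp only at h; omega :
        Set.InjOn (fun y : ℤ => 2*y+1) SC),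
      hSCeq, Set.ncard_image_of_injOn hinjC, hμside,
      Set.ncard_image_of_injOn (by intro x _ y _ h; simp only at h; omega :
        Set.InjOn (fun y : ℤ => y + ((s:ℤ) - r)) SA)]
    ring
  refine ⟨key, ?_⟩
  intro t
  have hookpos : ∀ (f : ℕ → ℕ) i j, 0 < hookLen f i j := by
    intro f i j
    simp only [hookLen]
    omega
  constructor
  · intro hcore i j hij hdvd
    obtain ⟨k, hkE⟩ := hdvd
    have hpos := hookpos μ i j
    rcases Nat.eq_zero_or_pos t with rfl | ht
    · simp at hkE; omega
    have hk1 : 0 < t * k := by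
      rcases Nat.eq_zero_or_pos k with rfl | h
      · omega
      · positivity
    have h1 : 0 < Set.ncard {p : ℕ × ℕ | p.2 < μ p.1 ∧ hookLen μ p.1 p.2 = t * k} := by
      rw [Set.ncard_pos (cells_finite hμ _)]
      exact ⟨(i, j), hij, hkE⟩
    have h2 := key (t*k) hk1
    have h3 : {p : ℕ × ℕ | p.2 < l p.1 ∧ hookLen l p.1 p.2 = 2 * (t*k)}.Nonempty := by
      rw [← Set.ncard_pos (cells_finite hl _)]
      omega
    obtain ⟨⟨i', j'⟩, hij', hh'⟩ := h3
    exact hcore i' j' hij' ⟨k, by rw [hh']; ring⟩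
  · intro hcore i j hij hdvd
    obtain ⟨k, hkE⟩ := hdvd
    have hpos := hookpos l i j
    rcases Nat.eq_zero_or_pos t with rfl | ht
    · simp at hkE; omega
    have hk1 : 0 < t * k := by
      rcases Nat.eq_zero_or_pos k with rfl | h
      · omega
      · positivity
    have h1 : 0 < Set.ncard {p : ℕ × ℕ | p.2 < l p.1 ∧ hookLen l p.1 p.2 = 2 * (t*k)} := by
      rw [Set.ncard_pos (cells_finite hl _)]
      exact ⟨(i, j), hij, by rw [hkE]; ring⟩
    have h2 := key (t*k) hk1
    have h3 : {p : ℕ × ℕ | p.2 < μ p.1 ∧ hookLen μ p.1 p.2 = t*k}.Nonempty := by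
      rw [← Set.ncard_pos (cells_finite hμ _)]
      omega
    obtain ⟨⟨i', j'⟩, hij', hh'⟩ := h3
    exact hcore i' j' hij' ⟨k, hh'⟩
end
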